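/- arXiv:1010.5673 — 7 statements merged into one kernel-verified Lean document; each statement's English description precedes it below -/
import Mathlib

section
/- For all n ≥ 1 and k ≥ 1, the number of Dyck paths of semilength n with exactly k up steps at height h ≡ 0 (mod 3) equals the number of Dyck paths of semilength n with exactly k+1 up steps at height h ≡ 2 (mod 3). -/
/-- A Dyck path of semilength `n`, encoded as a list of booleans where
`true` is an up step `(1,1)` and `false` is a down step `(1,-1)`;
the path never goes below the x-axis. -/
def IsDyckPath (n : ℕ) (p : List Bool) : Prop :=
  p.length = 2 * n ∧ p.count true = n ∧
  ∀ i, (p.take i).count false ≤ (p.take i).count true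

/-- The height of the `i`-th step: the y-coordinate reached after step `i`.
For an up step this is the height `h` such that the step rises from `y = h-1` to `y = h`. -/
def stepHeight (p : List Bool) (i : ℕ) : ℕ :=
  (p.take (i + 1)).count true - (p.take (i + 1)).count false

/-- The number of up steps of `p` at height `h` with `h ≡ c (mod m)`. -/
def upStepsMod (m c : ℕ) (p : List Bool) : ℕ :=
  ((Finset.range p.length).filter
    (fun i => p.getD i false = true ∧ stepHeight p i % m = c)).card

/-!
Let `U`, `V`, `W` be the generating functions of Dyck paths by semilength (variable `t`) and by
up steps ending at a height divisible by 3 (variable `x`), where the path is started at height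
0, 1, 2 respectively; started at height 1, the marked up steps are exactly those at height `≡ 2`.
The first-return decomposition `w = U w₁ D w₂` gives
`U = 1 + t V U`, `V = 1 + t W V`, `W = 1 + t x U W`, and the combination
`x·(first) - (1 - t x U)·(second) - t V·(third)` collapses to `(1 - t) (x U - V) = x - 1`.
Hence `x Uₙ - Vₙ = x - 1` for every `n`, and for `k ≥ 1` the coefficients of `x^(k+1)` give the
claim.
-/

open DyckStep

def upsAtMultiple (m : ℕ) : ℤ → List DyckStep → ℕ
  | _, [] => 0
  | h, U :: l => (if (m : ℤ) ∣ h + 1 then 1 else 0) + upsAtMultiple m (h + 1) l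
  | h, D :: l => upsAtMultiple m (h - 1) l

theorem upsAtMultiple_append (m : ℕ) (h : ℤ) (l l' : List DyckStep) :
    upsAtMultiple m h (l ++ l') =
      upsAtMultiple m h l + upsAtMultiple m (h + l.count U - l.count D) l' := by
  induction l generalizing h with
  | nil => simp [upsAtMultiple]
  | cons s l ih =>
    cases s <;> simp [upsAtMultiple, ih] <;> ring_nf

theorem upsAtMultiple_periodic (m : ℕ) (l : List DyckStep) :
    Function.Periodic (upsAtMultiple m · l) m := by
  induction l with
  | nil => simp [Function.Periodic, upsAtMultiple]
  | cons s l ih =>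
    intro h
    cases s
    · simp only [upsAtMultiple]
      rw [add_right_comm]
      simp only [dvd_add_self_right, ih (h + 1)]
    · simp only [upsAtMultiple]
      rw [add_sub_right_comm]
      exact ih (h - 1)

theorem Nat.mod_eq_iff_intCast_dvd_sub {a c m : ℕ} (hc : c < m) :
    a % m = c ↔ (m : ℤ) ∣ a - c := by
  rw [← Nat.mod_eq_of_lt hc, ← Nat.ModEq, Nat.modEq_iff_dvd, dvd_sub_comm, Nat.mod_eq_of_lt hc]

theorem upStepsMod_append_singleton (m c : ℕ) (p : List Bool) (b : Bool) :
    upStepsMod m c (p ++ [b]) = upStepsMod m c p +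
      if b = true ∧ stepHeight (p ++ [b]) p.length % m = c then 1 else 0 := by
  simp only [upStepsMod, Finset.card_filter, List.length_append, List.length_singleton,
    Finset.sum_range_succ, List.getD_append_right, le_refl, Nat.sub_self, List.getD_cons_zero]
  congr 1
  refine Finset.sum_congr rfl fun i hi => ?_
  rw [Finset.mem_range] at hi
  simp [stepHeight, List.getElem?_append_left hi,
    List.take_append_of_le_length (by omega : i + 1 ≤ p.length)]

def boolEquivDyckStep : Bool ≃ DyckStep where
  toFun b := cond b U D
  invFun | U => true | D => false
  left_inv b := by cases b <;> rfl
  right_inv s := by cases s <;> rfl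

@[simp] theorem boolEquivDyckStep_true : boolEquivDyckStep true = U := rfl

@[simp] theorem boolEquivDyckStep_false : boolEquivDyckStep false = D := rfl

theorem count_U_map_boolEquivDyckStep (p : List Bool) :
    (p.map boolEquivDyckStep).count U = p.count true :=
  List.count_map_of_injective _ _ boolEquivDyckStep.injective true

theorem count_D_map_boolEquivDyckStep (p : List Bool) :
    (p.map boolEquivDyckStep).count D = p.count false :=
  List.count_map_of_injective _ _ boolEquivDyckStep.injective false

theorem upStepsMod_eq_upsAtMultiple {m c : ℕ} (hc : c < m) {p : List Bool}
    (hp : ∀ q, q <+: p → q.count false ≤ q.count true) :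
    upStepsMod m c p = upsAtMultiple m (-c) (p.map boolEquivDyckStep) := by
  induction p using List.reverseRecOn with
  | nil => rfl
  | append_singleton p b ih =>
    have hp_le := hp p (List.prefix_append p [b])
    rw [upStepsMod_append_singleton, ih fun q hq => hp q (hq.trans (List.prefix_append p [b])),
      List.map_append, upsAtMultiple_append, count_U_map_boolEquivDyckStep,
      count_D_map_boolEquivDyckStep]
    congr 1
    cases b
    · simp [upsAtMultiple]
    · have hH : (stepHeight (p ++ [true]) p.length : ℤ) = p.count true + 1 - p.count false := by
        rw [stepHeight, List.take_of_length_le (by simp), List.count_append, List.count_append]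
        simp only [List.count_singleton, Bool.true_beq, Bool.false_eq_true, if_true, if_false]
        omega
      simp only [true_and, List.map_singleton, boolEquivDyckStep_true, upsAtMultiple, add_zero,
        Nat.mod_eq_iff_intCast_dvd_sub hc, hH]
      ring_nf

theorem IsDyckPath.count_false_le_count_true {n : ℕ} {p : List Bool} (hp : IsDyckPath n p)
    {q : List Bool} (hq : q <+: p) : q.count false ≤ q.count true := by
  rw [List.prefix_iff_eq_take.mp hq]
  exact hp.2.2 _

def IsDyckPath.toDyckWord {n : ℕ} {p : List Bool} (hp : IsDyckPath n p) : DyckWord where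
  toList := p.map boolEquivDyckStep
  count_U_eq_count_D := by
    have := p.count_true_add_count_false
    obtain ⟨hlength, hcount, -⟩ := hp
    rw [count_U_map_boolEquivDyckStep, count_D_map_boolEquivDyckStep]
    omega
  count_D_le_count_U i := by
    rw [← List.map_take, count_U_map_boolEquivDyckStep, count_D_map_boolEquivDyckStep]
    exact hp.2.2 i

theorem isDyckPath_map_symm {n : ℕ} {w : DyckWord} (hw : w.semilength = n) :
    IsDyckPath n (w.toList.map boolEquivDyckStep.symm) := by
  subst hw
  set p := w.toList.map boolEquivDyckStep.symm
  have hp : p.map boolEquivDyckStep = w.toList := by simp [p, List.map_map]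
  refine ⟨?_, ?_, fun i => ?_⟩
  · simp [p, w.two_mul_semilength_eq_length]
  · rw [← count_U_map_boolEquivDyckStep, hp]
    rfl
  · rw [← count_U_map_boolEquivDyckStep, ← count_D_map_boolEquivDyckStep, List.map_take, hp]
    exact w.count_D_le_count_U i

def dyckPathEquiv (n : ℕ) : {p // IsDyckPath n p} ≃ {w : DyckWord // w.semilength = n} where
  toFun p := ⟨p.2.toDyckWord, (count_U_map_boolEquivDyckStep p.1).trans p.2.2.1⟩
  invFun w := ⟨w.1.toList.map boolEquivDyckStep.symm, isDyckPath_map_symm w.2⟩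
  left_inv p := Subtype.ext (by simp [IsDyckPath.toDyckWord, List.map_map])
  right_inv w := Subtype.ext (DyckWord.ext (by simp [IsDyckPath.toDyckWord, List.map_map]))

theorem card_isDyckPath_upStepsMod_eq (n k : ℕ) {m c : ℕ} (hc : c < m) :
    Nat.card {p // IsDyckPath n p ∧ upStepsMod m c p = k} =
      Nat.card {w : DyckWord // w.semilength = n ∧ upsAtMultiple m (-c) w.toList = k} :=
  Nat.card_congr <| (Equiv.subtypeSubtypeEquivSubtypeInter _ _).symm.trans <|
    ((dyckPathEquiv n).subtypeEquiv fun p =>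
      by rw [upStepsMod_eq_upsAtMultiple hc fun _ => p.2.count_false_le_count_true]; rfl).trans
    (Equiv.subtypeSubtypeEquivSubtypeInter _ _)

open Finset

namespace DyckWord

def ofSemilength (n : ℕ) : Finset DyckWord :=
  (Finset.univ : Finset {w : DyckWord // w.semilength = n}).map (Function.Embedding.subtype _)

@[simp] theorem mem_ofSemilength {n : ℕ} {w : DyckWord} :
    w ∈ ofSemilength n ↔ w.semilength = n := by
  simp [ofSemilength]

theorem ofSemilength_zero : ofSemilength 0 = {0} := by
  ext w
  rw [mem_ofSemilength, Finset.mem_singleton, ← toList_eq_nil, ← List.length_eq_zero_iff,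
    ← two_mul_semilength_eq_length]
  omega

theorem ne_zero_of_mem_ofSemilength_succ {n : ℕ} {w : DyckWord}
    (hw : w ∈ ofSemilength (n + 1)) : w ≠ 0 := by
  rintro rfl
  simp at hw

theorem sum_ofSemilength_succ {M : Type*} [AddCommMonoid M] (f : DyckWord → M) (n : ℕ) :
    ∑ w ∈ ofSemilength (n + 1), f w = ∑ ij ∈ antidiagonal n,
      ∑ q ∈ ofSemilength ij.1, ∑ r ∈ ofSemilength ij.2, f (q.nest + r) := by
  simp only [← Finset.sum_product', Finset.sum_sigma']
  refine Finset.sum_nbij' (fun w => ⟨(w.insidePart.semilength, w.outsidePart.semilength),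
      (w.insidePart, w.outsidePart)⟩) (fun x => x.2.1.nest + x.2.2) ?_ ?_ ?_ ?_ ?_
  · intro w hw
    have := semilength_insidePart_add_semilength_outsidePart_add_one
      (ne_zero_of_mem_ofSemilength_succ hw)
    simp only [mem_ofSemilength] at hw
    simp only [mem_sigma, HasAntidiagonal.mem_antidiagonal, mem_product, mem_ofSemilength, and_true]
    omega
  · rintro ⟨⟨i, j⟩, q, r⟩ hx
    simp only [mem_sigma, HasAntidiagonal.mem_antidiagonal, mem_product, mem_ofSemilength] at hx
    rw [mem_ofSemilength, semilength_add, semilength_nest, hx.2.1, hx.2.2]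
    omega
  · intro w hw
    exact nest_insidePart_add_outsidePart (ne_zero_of_mem_ofSemilength_succ hw)
  · rintro ⟨⟨i, j⟩, q, r⟩ hx
    simp only [mem_sigma, HasAntidiagonal.mem_antidiagonal, mem_product, mem_ofSemilength] at hx
    obtain ⟨-, rfl, rfl⟩ := hx
    simp [insidePart_add, outsidePart_add, insidePart_nest, outsidePart_nest]
  · intro w hw
    rw [nest_insidePart_add_outsidePart (ne_zero_of_mem_ofSemilength_succ hw)]

theorem upsAtMultiple_nest_add (m : ℕ) (h : ℤ) (q r : DyckWord) :
    upsAtMultiple m h (q.nest + r).toList = (if (m : ℤ) ∣ h + 1 then 1 else 0) +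
      upsAtMultiple m (h + 1) q.toList + upsAtMultiple m h r.toList := by
  have hlist : (q.nest + r).toList = U :: (q.toList ++ D :: r.toList) := by
    change [U] ++ q.toList ++ [D] ++ r.toList = _
    simp
  rw [hlist, upsAtMultiple, upsAtMultiple_append, q.count_U_eq_count_D, add_sub_cancel_right,
    upsAtMultiple, add_sub_cancel_right, add_assoc]

end DyckWord

open Polynomial

noncomputable def upsPoly (m : ℕ) (h : ℤ) (n : ℕ) : ℤ[X] :=
  ∑ w ∈ DyckWord.ofSemilength n, X ^ upsAtMultiple m h w.toList

theorem coeff_upsPoly (m : ℕ) (h : ℤ) (n k : ℕ) :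
    (upsPoly m h n).coeff k =
      Nat.card {w : DyckWord // w.semilength = n ∧ upsAtMultiple m h w.toList = k} := by
  rw [upsPoly, finsetSum_coeff]
  simp only [coeff_X_pow]
  rw [sum_boole, ← Nat.card_eq_finsetCard]
  congr 1
  exact Nat.card_congr <| Equiv.subtypeEquivRight fun w => by simp [eq_comm]

theorem upsPoly_zero (m : ℕ) (h : ℤ) : upsPoly m h 0 = 1 := by
  simp [upsPoly, DyckWord.ofSemilength_zero, upsAtMultiple]

theorem upsPoly_succ (m : ℕ) (h : ℤ) (n : ℕ) :
    upsPoly m h (n + 1) = X ^ (if (m : ℤ) ∣ h + 1 then 1 else 0) *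
      ∑ ij ∈ antidiagonal n, upsPoly m (h + 1) ij.1 * upsPoly m h ij.2 := by
  simp_rw [upsPoly, sum_mul_sum, mul_sum, DyckWord.sum_ofSemilength_succ,
    DyckWord.upsAtMultiple_nest_add, pow_add, mul_assoc]

theorem upsPoly_periodic (m n : ℕ) : Function.Periodic (upsPoly m · n) m := fun h => by
  simp only [upsPoly, upsAtMultiple_periodic m _ h]

noncomputable def upsSeries (m : ℕ) (h : ℤ) : PowerSeries ℤ[X] :=
  PowerSeries.mk (upsPoly m h)

theorem upsSeries_eq (m : ℕ) (h : ℤ) :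
    upsSeries m h = 1 + PowerSeries.X * (PowerSeries.C (X ^ (if (m : ℤ) ∣ h + 1 then 1 else 0)) *
      (upsSeries m (h + 1) * upsSeries m h)) := by
  ext (_ | n)
  · simp [upsSeries, upsPoly_zero]
  · rw [map_add, PowerSeries.coeff_succ_X_mul, PowerSeries.coeff_C_mul, PowerSeries.coeff_mul]
    simp [upsSeries, upsPoly_succ]

theorem upsSeries_periodic (m : ℕ) : Function.Periodic (upsSeries m) m := fun h =>
  congrArg PowerSeries.mk (funext fun n => upsPoly_periodic m n h)

theorem one_sub_X_mul_upsSeries_three :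
    (1 - PowerSeries.X) * (PowerSeries.C X * upsSeries 3 0 - upsSeries 3 1) =
      PowerSeries.C (X - 1) := by
  have e0 := upsSeries_eq 3 0
  have e1 := upsSeries_eq 3 1
  have e2 := upsSeries_eq 3 2
  have h3 : upsSeries 3 3 = upsSeries 3 0 := by simpa using upsSeries_periodic 3 0
  norm_num [h3] at e0 e1 e2
  rw [map_sub, map_one]
  linear_combination PowerSeries.C X * e0 -
    (1 - PowerSeries.X * PowerSeries.C X * upsSeries 3 0) * e1 - PowerSeries.X * upsSeries 3 1 * e2

theorem X_mul_upsPoly_three_zero_sub (n : ℕ) : X * upsPoly 3 0 n - upsPoly 3 1 n = X - 1 := by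
  have key : PowerSeries.C X * upsSeries 3 0 - upsSeries 3 1 =
      PowerSeries.C (X - 1) * PowerSeries.mk 1 := by
    rw [← one_sub_X_mul_upsSeries_three, mul_comm _ (PowerSeries.mk 1), ← mul_assoc,
      PowerSeries.mk_one_mul_one_sub_eq_one, one_mul]
  have hn := congrArg (PowerSeries.coeff n) key
  rwa [map_sub, PowerSeries.coeff_C_mul, PowerSeries.coeff_C_mul, upsSeries, upsSeries,
    PowerSeries.coeff_mk, PowerSeries.coeff_mk, PowerSeries.coeff_mk, Pi.one_apply, mul_one] at hn

theorem upSteps_mod_three_shift_general (n k : ℕ) (hk : 1 ≤ k) :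
    Nat.card {p : List Bool // IsDyckPath n p ∧ upStepsMod 3 0 p = k} =
      Nat.card {p : List Bool // IsDyckPath n p ∧ upStepsMod 3 2 p = k + 1} := by
  have hshift : upsPoly 3 (-(2 : ℕ)) n = upsPoly 3 1 n := by
    simpa using (upsPoly_periodic 3 n (-2)).symm
  have hcoeff := congrArg (coeff · (k + 1)) (X_mul_upsPoly_three_zero_sub n)
  simp only [coeff_sub, coeff_X_mul, coeff_X, coeff_one] at hcoeff
  rw [if_neg (by omega), if_neg (by omega), sub_zero, sub_eq_zero] at hcoeff
  rw [card_isDyckPath_upStepsMod_eq n k (by norm_num),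
    card_isDyckPath_upStepsMod_eq n (k + 1) (by norm_num), ← Nat.cast_inj (R := ℤ),
    ← coeff_upsPoly, ← coeff_upsPoly, hshift, Nat.cast_zero, neg_zero]
  exact hcoeff

/-- The number of Dyck paths of semilength `n` with exactly `k` up steps at height
`h ≡ 0 (mod 3)` equals the number of Dyck paths of semilength `n` with exactly `k+1`
up steps at height `h ≡ 2 (mod 3)`. -/
theorem upSteps_mod_three_shift (n k : ℕ) (hn : 1 ≤ n) (hk : 1 ≤ k) :
    Nat.card {p : List Bool // IsDyckPath n p ∧ upStepsMod 3 0 p = k} =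
      Nat.card {p : List Bool // IsDyckPath n p ∧ upStepsMod 3 2 p = k + 1} :=
  upSteps_mod_three_shift_general n k hk
end

section
/- For every m ≥ 2, n ≥ 1 and k ≥ 1, the number of Dyck paths of semilength n with exactly k up steps at height h ≡ 0 (mod m) equals the number of Dyck paths of semilength n with exactly k+1 up steps at height h ≡ m-1 (mod m). -/
/-!
Call a level *visited* if it is `≡ m - 1 (mod m)`. Cut a Dyck path right after every step that
lands on a visited level, and reverse every piece except the first and the last one. A piece
between two visited levels `a` and `b` is reflected by reversal into heights `a + b - y`, and
`a + b - y` is visited exactly when `y` is; so the cut points of the image are the same and the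
map is an involution. Between two consecutive visits the path stays below the next visited level
above both ends, which keeps the reversed path nonnegative.

Reversing such a piece turns its up steps starting on a visited level (those landing at height
`≡ 0`) into up steps landing on a visited level, and vice versa. The first piece ends with the
only up step onto a visited level that it contains, and the last piece contains neither kind of
step, so the image has exactly one more up step landing at height `≡ m - 1` than the path has
landing at height `≡ 0`, unless the path never visits and both counts vanish.
-/

namespace DyckShift

def step (b : Bool) : ℤ := if b then 1 else -1

def height (q : List Bool) : ℤ := (q.map step).sum

@[simp] lemma height_nil : height [] = 0 := rfl

@[simp] lemma height_cons (b : Bool) (q : List Bool) : height (b :: q) = step b + height q := by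
  simp [height]

@[simp] lemma height_append (q r : List Bool) : height (q ++ r) = height q + height r := by
  simp [height]

@[simp] lemma height_reverse (q : List Bool) : height q.reverse = height q := by
  simp [height, List.sum_reverse]

lemma height_eq_count_sub_count (q : List Bool) :
    height q = (q.count true : ℤ) - q.count false := by
  induction q with
  | nil => simp
  | cons b q ih => cases b <;> simp [ih, step] <;> ring

lemma height_take_reverse (q : List Bool) (i : ℕ) :
    height (q.reverse.take i) = height q - height (q.take (q.length - i)) := by
  rw [List.take_reverse, height_reverse, eq_sub_iff_add_eq', ← height_append,
    List.take_append_drop]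

lemma height_take_succ_le (q : List Bool) (i : ℕ) :
    height (q.take (i + 1)) ≤ height (q.take i) + 1 := by
  rw [List.take_add_one, height_append]
  rcases q[i]? with _ | _ | _ <;> simp [step]

lemma height_take_le_succ (q : List Bool) (i : ℕ) :
    height (q.take i) ≤ height (q.take (i + 1)) + 1 := by
  rw [List.take_add_one, height_append]
  rcases q[i]? with _ | _ | _ <;> simp [step]; omega

lemma exists_eq_of_le_of_le {X : ℕ → ℤ} (hX : ∀ j, X (j + 1) ≤ X j + 1) {a b : ℕ}
    (hab : a ≤ b) {v : ℤ} (ha : X a ≤ v) (hb : v ≤ X b) : ∃ j, a ≤ j ∧ j ≤ b ∧ X j = v := by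
  induction b, hab using Nat.le_induction with
  | base => exact ⟨a, le_rfl, le_rfl, le_antisymm ha hb⟩
  | succ b hab ih =>
    by_cases hv : v ≤ X b
    · obtain ⟨j, haj, hjb, hj⟩ := ih hv
      exact ⟨j, haj, hjb.trans b.le_succ, hj⟩
    · exact ⟨b + 1, hab.trans b.le_succ, le_rfl, by linarith [hX b]⟩

lemma exists_height_take_eq_of_le (q : List Bool) {a b : ℕ} (hab : a ≤ b) {v : ℤ}
    (ha : height (q.take a) ≤ v) (hb : v ≤ height (q.take b)) :
    ∃ j, a ≤ j ∧ j ≤ b ∧ height (q.take j) = v :=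
  exists_eq_of_le_of_le (height_take_succ_le q) hab ha hb

lemma exists_height_take_eq_of_ge (q : List Bool) {a b : ℕ} (hab : a ≤ b) {v : ℤ}
    (ha : v ≤ height (q.take a)) (hb : height (q.take b) ≤ v) :
    ∃ j, a ≤ j ∧ j ≤ b ∧ height (q.take j) = v := by
  obtain ⟨j, haj, hjb, hj⟩ := exists_eq_of_le_of_le (X := fun j => -height (q.take j))
    (fun j => by linarith [height_take_le_succ q j]) hab (neg_le_neg ha) (neg_le_neg hb)
  exact ⟨j, haj, hjb, neg_inj.mp hj⟩

section Chunks

variable (V : ℤ → Prop)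

/-- Cut a path starting at height `h` right after every step that lands on a level in `V`;
the last piece (possibly empty) is the part after the last such visit. -/
def chunks [DecidablePred V] : ℤ → List Bool → List (List Bool)
  | _, [] => [[]]
  | h, b :: q =>
    if V (h + step b) then [b] :: chunks (h + step b) q
    else List.modifyHead (b :: ·) (chunks (h + step b) q)

structure IsSegment (h : ℤ) (c : List Bool) : Prop where
  ne_nil : c ≠ []
  lands : V (h + height c)
  avoids : ∀ i, 0 < i → i < c.length → ¬ V (h + height (c.take i))

def IsTail (h : ℤ) (t : List Bool) : Prop :=
  ∀ i, 0 < i → i ≤ t.length → ¬ V (h + height (t.take i))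

inductive IsChunking : ℤ → List (List Bool) → Prop
  | tail {h : ℤ} {t : List Bool} : IsTail V h t → IsChunking h [t]
  | cons {h : ℤ} {c : List Bool} {cs : List (List Bool)} :
      IsSegment V h c → IsChunking (h + height c) cs → IsChunking h (c :: cs)

variable {V}

lemma IsChunking.ne_nil {h : ℤ} {cs : List (List Bool)} (hcs : IsChunking V h cs) : cs ≠ [] := by
  cases hcs <;> simp

lemma isTail_cons_iff {h : ℤ} {b : Bool} {t : List Bool} :
    IsTail V h (b :: t) ↔ ¬ V (h + step b) ∧ IsTail V (h + step b) t := by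
  constructor
  · intro ht
    refine ⟨by simpa using ht 1, fun i hi hit => ?_⟩
    simpa [add_assoc] using ht (i + 1) (by omega) (by simpa using hit)
  · rintro ⟨hb, ht⟩ (_ | _ | i) hi hit
    · omega
    · simpa using hb
    · simpa [add_assoc] using ht (i + 1) (by omega) (by simpa using hit)

lemma isSegment_singleton_iff {h : ℤ} {b : Bool} : IsSegment V h [b] ↔ V (h + step b) := by
  refine ⟨fun hc => by simpa using hc.lands, fun hb => ⟨by simp, by simpa using hb, ?_⟩⟩
  simp only [List.length_singleton]
  omega

lemma isSegment_cons_iff {h : ℤ} {b : Bool} {c : List Bool} (hc : c ≠ []) :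
    IsSegment V h (b :: c) ↔ ¬ V (h + step b) ∧ IsSegment V (h + step b) c := by
  have hlen : 0 < c.length := List.length_pos_iff.mpr hc
  constructor
  · rintro ⟨-, hend, hint⟩
    refine ⟨by simpa using hint 1 one_pos (by simp; omega), hc, by simpa [add_assoc] using hend,
      fun i hi hic => ?_⟩
    simpa [add_assoc] using hint (i + 1) (by omega) (by simpa using hic)
  · rintro ⟨hb, -, hend, hint⟩
    refine ⟨by simp, by simpa [add_assoc] using hend, ?_⟩
    rintro (_ | _ | i) hi hic
    · omega
    · simpa using hb
    · simpa [add_assoc] using hint (i + 1) (by omega) (by simpa using hic)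

variable [DecidablePred V]

lemma isChunking_chunks (p : List Bool) (h : ℤ) : IsChunking V h (chunks V h p) := by
  induction p generalizing h with
  | nil => exact .tail fun i hi hi' => by simp at hi'; omega
  | cons b q ih =>
    by_cases hb : V (h + step b)
    · rw [chunks, if_pos hb]
      exact .cons (isSegment_singleton_iff.mpr hb) (by simpa using ih (h + step b))
    · rw [chunks, if_neg hb]
      have hq := ih (h + step b)
      generalize chunks V (h + step b) q = cs at hq ⊢
      rcases hq with ⟨ht⟩ | ⟨hc, hcs⟩
      · exact .tail (isTail_cons_iff.mpr ⟨hb, ht⟩)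
      · refine .cons (isSegment_cons_iff hc.ne_nil |>.mpr ⟨hb, hc⟩) ?_
        simpa [add_assoc] using hcs

lemma flatten_chunks (p : List Bool) (h : ℤ) : (chunks V h p).flatten = p := by
  induction p generalizing h with
  | nil => rfl
  | cons b q ih =>
    rw [chunks]
    split_ifs
    · simp [ih]
    · obtain ⟨c, cs, hccs⟩ :=
        List.exists_cons_of_ne_nil (isChunking_chunks (V := V) q (h + step b)).ne_nil
      have := ih (h + step b)
      rw [hccs] at this ⊢
      simp [← this]

lemma chunks_of_isTail {h : ℤ} {t : List Bool} (ht : IsTail V h t) : chunks V h t = [t] := by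
  induction t generalizing h with
  | nil => rfl
  | cons b t ih =>
    obtain ⟨hb, ht⟩ := isTail_cons_iff.mp ht
    rw [chunks, if_neg hb, ih ht, List.modifyHead_cons]

lemma chunks_append_of_isSegment {h : ℤ} {c : List Bool} (hc : IsSegment V h c)
    (r : List Bool) : chunks V h (c ++ r) = c :: chunks V (h + height c) r := by
  induction c generalizing h with
  | nil => exact absurd rfl hc.ne_nil
  | cons b c ih =>
    rcases eq_or_ne c [] with rfl | hne
    · rw [isSegment_singleton_iff] at hc
      simp [chunks, hc]
    · obtain ⟨hb, hc⟩ := (isSegment_cons_iff hne).mp hc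
      rw [List.cons_append, chunks, if_neg hb, ih hc, List.modifyHead_cons, height_cons, add_assoc]

lemma chunks_flatten_of_isChunking {h : ℤ} {cs : List (List Bool)} (hcs : IsChunking V h cs) :
    chunks V h cs.flatten = cs := by
  induction hcs with
  | tail ht => simpa using chunks_of_isTail ht
  | cons hc _ ih => rw [List.flatten_cons, chunks_append_of_isSegment hc, ih]

end Chunks

section Reversal

variable {α : Type*}

def reverseInit : List (List α) → List (List α)
  | [] => []
  | [t] => [t]
  | c :: cs => c.reverse :: reverseInit cs

lemma reverseInit_cons (c : List α) {cs : List (List α)} (hcs : cs ≠ []) :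
    reverseInit (c :: cs) = c.reverse :: reverseInit cs := by
  obtain ⟨d, ds, rfl⟩ := List.exists_cons_of_ne_nil hcs
  rfl

lemma reverseInit_ne_nil {cs : List (List α)} (hcs : cs ≠ []) : reverseInit cs ≠ [] := by
  rcases cs with _ | ⟨c, _ | ⟨d, ds⟩⟩
  · exact hcs
  · simp [reverseInit]
  · simp [reverseInit]

lemma reverseInit_reverseInit (cs : List (List α)) : reverseInit (reverseInit cs) = cs := by
  induction cs with
  | nil => rfl
  | cons c cs ih =>
    rcases eq_or_ne cs [] with rfl | hcs
    · rfl
    · rw [reverseInit_cons c hcs, reverseInit_cons _ (reverseInit_ne_nil hcs), ih,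
        List.reverse_reverse]

lemma flatten_reverseInit_perm (cs : List (List α)) : (reverseInit cs).flatten.Perm cs.flatten := by
  induction cs with
  | nil => rfl
  | cons c cs ih =>
    rcases eq_or_ne cs [] with rfl | hcs
    · rfl
    · rw [reverseInit_cons c hcs, List.flatten_cons, List.flatten_cons]
      exact (List.reverse_perm c).append ih

def reverseMiddle : List (List α) → List (List α)
  | [] => []
  | c :: cs => c :: reverseInit cs

lemma reverseMiddle_reverseMiddle (cs : List (List α)) :
    reverseMiddle (reverseMiddle cs) = cs := by
  cases cs <;> simp [reverseMiddle, reverseInit_reverseInit]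

lemma flatten_reverseMiddle_perm (cs : List (List α)) :
    (reverseMiddle cs).flatten.Perm cs.flatten := by
  cases cs with
  | nil => rfl
  | cons c cs => exact (flatten_reverseInit_perm cs).append_left c

end Reversal

def ReflectionInvariant (V : ℤ → Prop) : Prop := ∀ a b y, V a → V b → (V (a + b - y) ↔ V y)

section Involution

variable {V : ℤ → Prop} (hV : ReflectionInvariant V)
include hV

lemma IsSegment.reverse {h : ℤ} {c : List Bool} (hh : V h) (hc : IsSegment V h c) :
    IsSegment V h c.reverse := by
  obtain ⟨hne, hend, hint⟩ := hc
  refine ⟨by simpa using hne, by simpa using hend, fun i hi hic => ?_⟩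
  rw [List.length_reverse] at hic
  rw [height_take_reverse, ← add_sub_assoc, show h + height c - height (c.take (c.length - i)) =
    h + (h + height c) - (h + height (c.take (c.length - i))) by ring, hV _ _ _ hh hend]
  exact hint _ (by omega) (by omega)

lemma isChunking_reverseInit {h : ℤ} {cs : List (List Bool)} (hcs : IsChunking V h cs)
    (hh : V h) : IsChunking V h (reverseInit cs) := by
  induction hcs with
  | tail ht => exact .tail ht
  | cons hc hcs ih =>
    rw [reverseInit_cons _ hcs.ne_nil]
    exact .cons (hc.reverse hV hh) (by simpa using ih hc.lands)

lemma isChunking_reverseMiddle {h : ℤ} {cs : List (List Bool)} (hcs : IsChunking V h cs) :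
    IsChunking V h (reverseMiddle cs) := by
  cases hcs with
  | tail ht => exact .tail ht
  | cons hc hcs => exact .cons hc (isChunking_reverseInit hV hcs hc.lands)

end Involution

variable (V : ℤ → Prop) [DecidablePred V]

def phi (h : ℤ) (p : List Bool) : List Bool := (reverseMiddle (chunks V h p)).flatten

variable {V}

lemma phi_perm (h : ℤ) (p : List Bool) : (phi V h p).Perm p := by
  simpa [phi, flatten_chunks] using flatten_reverseMiddle_perm (chunks V h p)

lemma phi_cases (h : ℤ) (p : List Bool) :
    (IsTail V h p ∧ phi V h p = p) ∨
      ∃ c cs, IsSegment V h c ∧ IsChunking V (h + height c) cs ∧ p = c ++ cs.flatten ∧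
        phi V h p = c ++ (reverseInit cs).flatten := by
  have hflat := flatten_chunks (V := V) p h
  have hchunks := isChunking_chunks (V := V) p h
  rw [phi]
  generalize chunks V h p = cs at hflat hchunks ⊢
  subst hflat
  cases hchunks with
  | tail ht => exact .inl ⟨by simpa using ht, by simp [reverseMiddle, reverseInit]⟩
  | @cons _ c cs hc hcs => exact .inr ⟨c, cs, hc, hcs, by simp, by simp [reverseMiddle]⟩

lemma chunks_phi (hV : ReflectionInvariant V) (h : ℤ) (p : List Bool) :
    chunks V h (phi V h p) = reverseMiddle (chunks V h p) :=
  chunks_flatten_of_isChunking (isChunking_reverseMiddle hV (isChunking_chunks p h))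

lemma phi_phi (hV : ReflectionInvariant V) (h : ℤ) (p : List Bool) :
    phi V h (phi V h p) = p := by
  rw [phi, chunks_phi hV, reverseMiddle_reverseMiddle, flatten_chunks]

section Statistics

def upLandings : List Bool → List ℤ
  | [] => []
  | b :: q => (if b then [1] else []) ++ (upLandings q).map (step b + ·)

lemma upLandings_append (q r : List Bool) :
    upLandings (q ++ r) = upLandings q ++ (upLandings r).map (height q + ·) := by
  induction q with
  | nil => simp [upLandings]
  | cons b q ih => simp [upLandings, ih, List.map_map, Function.comp_def, add_assoc]

lemma upLandings_reverse (q : List Bool) :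
    upLandings q.reverse = ((upLandings q).map (height q + 1 - ·)).reverse := by
  induction q with
  | nil => rfl
  | cons b q ih =>
    cases b <;> simp [upLandings, upLandings_append, ih, List.map_map, Function.comp_def, step] <;>
      grind

lemma mem_upLandings {q : List Bool} {y : ℤ} (hy : y ∈ upLandings q) :
    ∃ i < q.length,
      q[i]? = some true ∧ height (q.take i) + 1 = y ∧ height (q.take (i + 1)) = y := by
  induction q generalizing y with
  | nil => simp [upLandings] at hy
  | cons b q ih =>
    simp only [upLandings, List.mem_append, List.mem_map] at hy
    rcases hy with hy | ⟨y, hy, rfl⟩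
    · cases b
      · simp at hy
      · obtain rfl : y = 1 := by simpa using hy
        exact ⟨0, by simp, rfl, by simp, by simp [step]⟩
    · obtain ⟨i, hi, hqi, hy, hy'⟩ := ih hy
      exact ⟨i + 1, by simpa using hi, by simpa using hqi, by simp [← hy, add_assoc],
        by simp [← hy']⟩

variable {V : ℤ → Prop}

/-- If the last step went down, the path would reach its final level before the end. -/
lemma IsSegment.getLast?_eq_some_true {h : ℤ} {c : List Bool} (hc : IsSegment V h c)
    (hh : ¬ V h) (hpos : 0 ≤ height c) : c.getLast? = some true := by
  obtain ⟨hne, hend, hint⟩ := hc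
  obtain ⟨c, b, rfl⟩ := (List.eq_nil_or_concat _).resolve_left hne
  rw [List.concat_eq_append] at *
  cases b
  · exfalso
    obtain ⟨j, -, hjc, hj⟩ := exists_height_take_eq_of_le (c ++ [false]) (Nat.zero_le c.length)
      (v := height (c ++ [false])) (by simpa using hpos) (by simp [step])
    rcases Nat.eq_zero_or_pos j with rfl | hj0
    · exact hh (by simpa [← hj] using hend)
    · exact hint j hj0 (by simp; omega) (hj ▸ hend)
  · simp

variable [DecidablePred V]

/-- `upCount (fun y => V (y - 1)) h q` counts the up steps that start on a level in `V`. -/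
def upCount (P : ℤ → Prop) [DecidablePred P] (h : ℤ) (q : List Bool) : ℕ :=
  (upLandings q).countP fun y => P (h + y)

lemma upCount_congr {P Q : ℤ → Prop} [DecidablePred P] [DecidablePred Q] (hPQ : ∀ y, P y ↔ Q y)
    (h : ℤ) (q : List Bool) : upCount P h q = upCount Q h q :=
  List.countP_congr fun y _ => by simpa using hPQ (h + y)

lemma upCount_append (h : ℤ) (q r : List Bool) :
    upCount V h (q ++ r) = upCount V h q + upCount V (h + height q) r := by
  simp [upCount, upLandings_append, Function.comp_def, add_assoc]

lemma upCount_cons (P : ℤ → Prop) [DecidablePred P] (h : ℤ) (b : Bool) (q : List Bool) :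
    upCount P h (b :: q) =
      upCount P (h + step b) q + if b = true ∧ P (h + step b) then 1 else 0 := by
  rw [← List.singleton_append, upCount_append, add_comm]
  cases b <;> simp [upCount, upLandings, step]

lemma upCount_eq_countP_range (P : ℤ → Prop) [DecidablePred P] (h : ℤ) (q : List Bool) :
    upCount P h q = (List.range q.length).countP
      fun i => q[i]? = some true ∧ P (h + height (q.take (i + 1))) := by
  induction q generalizing h with
  | nil => rfl
  | cons b q ih =>
    rw [List.length_cons, List.range_succ_eq_map, List.countP_cons, List.countP_map, upCount_cons,
      ih]
    congr 1
    · simp [Function.comp_def, add_assoc]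
    · simp

lemma upCount_reverse (hV : ReflectionInvariant V) {h : ℤ} {q : List Bool} (hh : V h)
    (hq : V (h + height q)) : upCount V h q.reverse = upCount (fun y => V (y - 1)) h q := by
  simp only [upCount, upLandings_reverse, List.countP_reverse, List.countP_map]
  refine List.countP_congr fun y _ => ?_
  simp only [Function.comp_apply, decide_eq_true_eq]
  rw [← hV _ _ _ hh hq]
  ring_nf

lemma upCount_eq_zero_of_forall {h : ℤ} {q : List Bool}
    (hq : ∀ i < q.length, q[i]? = some true → ¬ V (h + height (q.take (i + 1)))) :
    upCount V h q = 0 := by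
  refine List.countP_eq_zero.mpr fun y hy => ?_
  obtain ⟨i, hi, hqi, -, rfl⟩ := mem_upLandings hy
  simpa using hq i hi hqi

lemma upCount_sub_one_eq_zero_of_forall {h : ℤ} {q : List Bool}
    (hq : ∀ i < q.length, q[i]? = some true → ¬ V (h + height (q.take i))) :
    upCount (fun y => V (y - 1)) h q = 0 := by
  refine List.countP_eq_zero.mpr fun y hy => ?_
  obtain ⟨i, hi, hqi, rfl, -⟩ := mem_upLandings hy
  simpa [← add_assoc] using hq i hi hqi

lemma IsTail.upCount_eq_zero {h : ℤ} {t : List Bool} (ht : IsTail V h t) : upCount V h t = 0 :=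
  upCount_eq_zero_of_forall fun i hi _ => ht (i + 1) i.succ_pos hi

/-- An initial up step from a level in `V` would force the tail to pass through that level
again. -/
lemma IsTail.upCount_sub_one_eq_zero {h : ℤ} {t : List Bool} (ht : IsTail V h t)
    (hend : height t ≤ 0) : upCount (fun y => V (y - 1)) h t = 0 := by
  refine upCount_sub_one_eq_zero_of_forall fun i hi hti hvis => ?_
  rcases Nat.eq_zero_or_pos i with rfl | hi0
  · have hup : height (t.take 1) = 1 := by
      obtain ⟨b, t, rfl⟩ := List.exists_cons_of_length_pos hi
      simp_all [step]
    obtain ⟨j, hj1, hjt, hj⟩ := exists_height_take_eq_of_ge t (show 1 ≤ t.length from hi) (v := 0)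
      (by omega) (by simpa using hend)
    exact ht j hj1 hjt (by simpa [hj] using hvis)
  · exact ht i hi0 hi.le hvis

lemma IsSegment.upCount_sub_one_eq_zero {h : ℤ} {c : List Bool} (hc : IsSegment V h c)
    (hh : ¬ V h) : upCount (fun y => V (y - 1)) h c = 0 := by
  refine upCount_sub_one_eq_zero_of_forall fun i hi _ => ?_
  rcases Nat.eq_zero_or_pos i with rfl | hi0
  · simpa using hh
  · exact hc.avoids i hi0 hi

lemma IsSegment.upCount_eq_one {h : ℤ} {c : List Bool} (hc : IsSegment V h c)
    (hlast : c.getLast? = some true) : upCount V h c = 1 := by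
  obtain ⟨c, rfl⟩ := List.getLast?_eq_some_iff.mp hlast
  obtain ⟨-, hend, hint⟩ := hc
  rw [upCount_append, upCount_eq_zero_of_forall, zero_add]
  · simpa [upCount, upLandings, step, add_assoc] using hend
  · intro i hi _
    simpa [List.take_append_of_le_length (show i + 1 ≤ c.length by omega)] using
      hint (i + 1) i.succ_pos (by simp; omega)

end Statistics

def NonnegFrom (h : ℤ) (q : List Bool) : Prop := ∀ i, 0 ≤ h + height (q.take i)

lemma nonnegFrom_append {h : ℤ} {q r : List Bool} :
    NonnegFrom h (q ++ r) ↔ NonnegFrom h q ∧ NonnegFrom (h + height q) r := by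
  refine ⟨fun H => ⟨fun i => ?_, fun i => ?_⟩, fun ⟨Hq, Hr⟩ i => ?_⟩
  · rcases le_total i q.length with hi | hi
    · simpa [List.take_append, Nat.sub_eq_zero_of_le hi] using H i
    · simpa [List.take_of_length_le hi, List.take_append] using H q.length
  · simpa [List.take_append, List.take_of_length_le (Nat.le_add_right q.length i), add_assoc]
      using H (q.length + i)
  · rcases le_total i q.length with hi | hi
    · simpa [List.take_append, Nat.sub_eq_zero_of_le hi] using Hq i
    · simpa [List.take_append, List.take_of_length_le hi, add_assoc] using Hr (i - q.length)

section Phi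

variable {V : ℤ → Prop} [DecidablePred V] (hV : ReflectionInvariant V)
include hV

lemma upCount_flatten_reverseInit {h : ℤ} {cs : List (List Bool)} (hcs : IsChunking V h cs)
    (hh : V h) (hnn : NonnegFrom h cs.flatten) (hend : h + height cs.flatten = 0) :
    upCount V h (reverseInit cs).flatten = upCount (fun y => V (y - 1)) h cs.flatten := by
  induction hcs with
  | @tail h t ht =>
    simp only [reverseInit, List.flatten_cons, List.flatten_nil, List.append_nil] at hnn hend ⊢
    have hh0 : 0 ≤ h := by simpa using hnn 0
    rw [ht.upCount_eq_zero, ht.upCount_sub_one_eq_zero (by linarith)]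
  | cons hc hcs ih =>
    rw [List.flatten_cons, nonnegFrom_append] at hnn
    rw [List.flatten_cons, height_append, ← add_assoc] at hend
    rw [reverseInit_cons _ hcs.ne_nil, List.flatten_cons, List.flatten_cons, upCount_append,
      upCount_append, height_reverse, upCount_reverse hV hh hc.lands, ih hc.lands hnn.2 hend]

lemma upCount_phi (h0 : ¬ V 0) {p : List Bool} (hnn : NonnegFrom 0 p) (hp : height p = 0) :
    upCount V 0 (phi V 0 p) = upCount (fun y => V (y - 1)) 0 p + 1 ∨
      upCount (fun y => V (y - 1)) 0 p = 0 ∧ upCount V 0 (phi V 0 p) = 0 := by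
  rcases phi_cases (V := V) 0 p with ⟨ht, hphi⟩ | ⟨c, cs, hc, hcs, rfl, hphi⟩
  · rw [hphi]
    exact .inr ⟨ht.upCount_sub_one_eq_zero hp.le, ht.upCount_eq_zero⟩
  · left
    rw [nonnegFrom_append] at hnn
    rw [height_append] at hp
    have hlast : c.getLast? = some true :=
      hc.getLast?_eq_some_true h0 (by simpa [List.take_length] using hnn.1 c.length)
    rw [hphi, upCount_append, upCount_append, hc.upCount_eq_one hlast,
      hc.upCount_sub_one_eq_zero h0,
      upCount_flatten_reverseInit hV hcs hc.lands hnn.2 (by simpa using hp)]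
    omega

end Phi

def IsPredMultiple (m : ℕ) (y : ℤ) : Prop := (m : ℤ) ∣ y + 1

instance (m : ℕ) : DecidablePred (IsPredMultiple m) :=
  fun y => inferInstanceAs (Decidable ((m : ℤ) ∣ y + 1))

section PredMultiple

variable {m : ℕ}

lemma reflectionInvariant_isPredMultiple (m : ℕ) : ReflectionInvariant (IsPredMultiple m) := by
  intro a b y ha hb
  rw [IsPredMultiple, show a + b - y + 1 = (a + 1) + (b + 1) - (y + 1) by ring]
  exact dvd_sub_right (dvd_add ha hb)

lemma isPredMultiple_sub_one_iff {y : ℤ} : IsPredMultiple m (y - 1) ↔ y % m = ((0 : ℕ) : ℤ) := by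
  rw [IsPredMultiple, sub_add_cancel, Nat.cast_zero, Int.dvd_iff_emod_eq_zero]

lemma isPredMultiple_iff (hm : 0 < m) {y : ℤ} : IsPredMultiple m y ↔ y % m = ((m - 1 : ℕ) : ℤ) := by
  have hlt : ((m - 1 : ℕ) : ℤ) % m = ((m - 1 : ℕ) : ℤ) := Int.emod_eq_of_lt (by omega) (by omega)
  rw [← hlt, ← Int.ModEq, Int.modEq_iff_dvd, IsPredMultiple, Nat.cast_sub hm, Nat.cast_one,
    show (m : ℤ) - 1 - y = m - (y + 1) by ring, dvd_sub_right dvd_rfl]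

lemma not_isPredMultiple_zero (hm : 2 ≤ m) : ¬ IsPredMultiple m 0 := by
  intro h
  have := Int.le_of_dvd one_pos (by simpa [IsPredMultiple] using h)
  omega

lemma IsPredMultiple.sub_one_le {y : ℤ} (hy : IsPredMultiple m y) (h0 : 0 ≤ y) :
    (m : ℤ) - 1 ≤ y := by
  have := Int.le_of_dvd (by omega) hy
  omega

lemma IsPredMultiple.add_self {y : ℤ} (hy : IsPredMultiple m y) : IsPredMultiple m (y + m) := by
  simpa [IsPredMultiple, add_right_comm] using dvd_add hy (dvd_refl (m : ℤ))

end PredMultiple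

section Nonnegativity

variable {m : ℕ} (hm : 0 < m)
include hm

lemma IsSegment.height_take_lt {h : ℤ} {c : List Bool} (hc : IsSegment (IsPredMultiple m) h c)
    (hh : IsPredMultiple m h) (j : ℕ) : h + height (c.take j) < max h (h + height c) + m := by
  by_contra! hj
  have hM : IsPredMultiple m (max h (h + height c)) := by
    rcases max_choice h (h + height c) with e | e <;> rw [e]
    exacts [hh, hc.lands]
  have := le_max_left h (h + height c)
  have := le_max_right h (h + height c)
  obtain ⟨k, -, -, hk⟩ := exists_height_take_eq_of_le c (Nat.zero_le j)
    (v := max h (h + height c) + m - h) (by simp; omega) (by omega)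
  have hk0 : 0 < k := Nat.pos_of_ne_zero fun hk0 => by simp [hk0] at hk; omega
  have hkc : k < c.length := by
    by_contra! hkc
    rw [List.take_of_length_le hkc] at hk
    omega
  exact hc.avoids k hk0 hkc (by rw [hk, add_sub_cancel]; exact hM.add_self)

lemma IsSegment.nonnegFrom_reverse {h : ℤ} {c : List Bool}
    (hc : IsSegment (IsPredMultiple m) h c) (hh : IsPredMultiple m h) (hnn : NonnegFrom h c) :
    NonnegFrom h c.reverse := by
  have h1 := hh.sub_one_le (by simpa using hnn 0)
  have h2 := hc.lands.sub_one_le (by simpa [List.take_length] using hnn c.length)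
  intro i
  have := hc.height_take_lt hm hh (c.length - i)
  rw [height_take_reverse]
  omega

lemma nonnegFrom_flatten_reverseInit {h : ℤ} {cs : List (List Bool)}
    (hcs : IsChunking (IsPredMultiple m) h cs) (hh : IsPredMultiple m h)
    (hnn : NonnegFrom h cs.flatten) : NonnegFrom h (reverseInit cs).flatten := by
  induction hcs with
  | tail => simpa [reverseInit] using hnn
  | cons hc hcs ih =>
    rw [List.flatten_cons, nonnegFrom_append] at hnn
    rw [reverseInit_cons _ hcs.ne_nil, List.flatten_cons, nonnegFrom_append, height_reverse]
    exact ⟨hc.nonnegFrom_reverse hm hh hnn.1, ih hc.lands hnn.2⟩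

lemma nonnegFrom_phi {h : ℤ} {p : List Bool} (hnn : NonnegFrom h p) :
    NonnegFrom h (phi (IsPredMultiple m) h p) := by
  rcases phi_cases (V := IsPredMultiple m) h p with ⟨-, hphi⟩ | ⟨c, cs, hc, hcs, rfl, hphi⟩
  · rwa [hphi]
  · rw [nonnegFrom_append] at hnn
    rw [hphi, nonnegFrom_append]
    exact ⟨hnn.1, nonnegFrom_flatten_reverseInit hm hcs hc.lands hnn.2⟩

end Nonnegativity

section DyckPaths

variable {m n : ℕ} {p : List Bool}

lemma isDyckPath_iff :
    IsDyckPath n p ↔ p.length = 2 * n ∧ p.count true = n ∧ NonnegFrom 0 p := by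
  refine and_congr_right fun _ => and_congr_right fun _ => forall_congr' fun i => ?_
  rw [zero_add, height_eq_count_sub_count, sub_nonneg, Nat.cast_le]

lemma height_eq_zero_of_isDyckPath (hp : IsDyckPath n p) : height p = 0 := by
  have := List.count_true_add_count_false p
  have := hp.1
  have := hp.2.1
  rw [height_eq_count_sub_count]
  omega

lemma isDyckPath_phi (hm : 0 < m) (hp : IsDyckPath n p) :
    IsDyckPath n (phi (IsPredMultiple m) 0 p) := by
  rw [isDyckPath_iff] at hp ⊢
  exact ⟨(phi_perm (V := IsPredMultiple m) 0 p).length_eq ▸ hp.1,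
    (phi_perm (V := IsPredMultiple m) 0 p).count_eq true ▸ hp.2.1,
    nonnegFrom_phi hm hp.2.2⟩

lemma isDyckPath_phi_iff (hm : 0 < m) :
    IsDyckPath n (phi (IsPredMultiple m) 0 p) ↔ IsDyckPath n p :=
  ⟨fun hp => phi_phi (reflectionInvariant_isPredMultiple m) 0 p ▸ isDyckPath_phi hm hp,
    isDyckPath_phi hm⟩

lemma upStepsMod_eq_upCount (m c : ℕ) (hnn : NonnegFrom 0 p) :
    upStepsMod m c p = upCount (fun y => y % (m : ℤ) = c) 0 p := by
  rw [upStepsMod, Finset.card_def, Finset.filter_val, Finset.range_val, Multiset.range,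
    Multiset.filter_coe, Multiset.coe_card, ← List.countP_eq_length_filter, upCount_eq_countP_range]
  refine List.countP_congr fun i _ => ?_
  simp only [decide_eq_true_eq]
  refine and_congr ?_ ?_
  · rw [List.getD_eq_getElem?_getD]
    cases p[i]? <;> simp
  · have hh := hnn (i + 1)
    rw [zero_add, height_eq_count_sub_count] at hh ⊢
    rw [stepHeight, ← Int.natCast_inj, Int.natCast_mod, Nat.cast_sub (by omega)]

lemma upStepsMod_phi (hm : 2 ≤ m) (hp : IsDyckPath n p) :
    upStepsMod m (m - 1) (phi (IsPredMultiple m) 0 p) = upStepsMod m 0 p + 1 ∨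
      upStepsMod m 0 p = 0 ∧ upStepsMod m (m - 1) (phi (IsPredMultiple m) 0 p) = 0 := by
  have hnn := (isDyckPath_iff.mp hp).2.2
  have hnn' := (isDyckPath_iff.mp (isDyckPath_phi (m := m) (by omega) hp)).2.2
  have ha : upStepsMod m 0 p = upCount (fun y => IsPredMultiple m (y - 1)) 0 p := by
    rw [upStepsMod_eq_upCount m 0 hnn]
    exact upCount_congr (fun y => isPredMultiple_sub_one_iff.symm) 0 p
  have hb : upStepsMod m (m - 1) (phi (IsPredMultiple m) 0 p) =
      upCount (IsPredMultiple m) 0 (phi (IsPredMultiple m) 0 p) := by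
    rw [upStepsMod_eq_upCount m (m - 1) hnn']
    exact upCount_congr (fun y => (isPredMultiple_iff (by omega)).symm) 0 _
  rw [ha, hb]
  exact upCount_phi (reflectionInvariant_isPredMultiple m) (not_isPredMultiple_zero hm) hnn
    (height_eq_zero_of_isDyckPath hp)

end DyckPaths

end DyckShift

open DyckShift in
theorem upSteps_mod_m_shift_general (m n k : ℕ) (hm : 2 ≤ m) (hk : 1 ≤ k) :
    Nat.card {p : List Bool // IsDyckPath n p ∧ upStepsMod m 0 p = k} =
      Nat.card {p : List Bool // IsDyckPath n p ∧ upStepsMod m (m - 1) p = k + 1} := by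
  have hphi : ∀ p, IsDyckPath n p ∧ upStepsMod m 0 p = k ↔
      IsDyckPath n (phi (IsPredMultiple m) 0 p) ∧
        upStepsMod m (m - 1) (phi (IsPredMultiple m) 0 p) = k + 1 := by
    intro p
    rw [isDyckPath_phi_iff (by omega)]
    by_cases hp : IsDyckPath n p
    · rcases upStepsMod_phi hm hp with h | h <;> simp only [hp, true_and] <;> omega
    · simp [hp]
  exact Nat.card_congr <|
    (Function.Involutive.toPerm _ (phi_phi (reflectionInvariant_isPredMultiple m) 0)).subtypeEquiv
      hphi

/-- For `m ≥ 2`, the number of Dyck paths of semilength `n` with exactly `k` up steps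
at height `h ≡ 0 (mod m)` equals the number of Dyck paths of semilength `n` with
exactly `k+1` up steps at height `h ≡ m-1 (mod m)`. -/
theorem upSteps_mod_m_shift (m n k : ℕ) (hm : 2 ≤ m) (hn : 1 ≤ n) (hk : 1 ≤ k) :
    Nat.card {p : List Bool // IsDyckPath n p ∧ upStepsMod m 0 p = k} =
      Nat.card {p : List Bool // IsDyckPath n p ∧ upStepsMod m (m - 1) p = k + 1} :=
  upSteps_mod_m_shift_general m n k hm hk
end

section
/- For every m ≥ 2 and n ≥ 1, the number of Dyck paths of semilength n with no up steps at height h ≡ 0 (mod m) equals the number of Dyck paths of semilength n with no up steps at height h ≡ m-1 (mod m) plus the number of Dyck paths of semilength n with exactly one up step at height h ≡ m-1 (mod m). -/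
namespace DyckPath

def height (p : List Bool) (i : ℕ) : ℤ :=
  (p.take i).count true - (p.take i).count false

@[simp]
lemma height_zero (p : List Bool) : height p 0 = 0 := by
  simp [height]

lemma height_succ {p : List Bool} {i : ℕ} (h : i < p.length) :
    height p (i + 1) = height p i + if p[i] then 1 else -1 := by
  rw [height, height, List.take_succ_eq_append_getElem h]
  cases p[i] <;> simp [List.count_append] <;> ring

lemma height_of_length_le {p : List Bool} {i : ℕ} (h : p.length ≤ i) :
    height p i = height p p.length := by
  rw [height, height, List.take_of_length_le h, List.take_of_length_le le_rfl]

lemma height_succ_le (p : List Bool) (i : ℕ) : height p (i + 1) ≤ height p i + 1 := by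
  rcases lt_or_ge i p.length with h | h
  · rw [height_succ h]; split <;> omega
  · rw [height_of_length_le h, height_of_length_le (by omega : p.length ≤ i + 1)]; omega

lemma height_le_height_succ_add_one (p : List Bool) (i : ℕ) :
    height p i ≤ height p (i + 1) + 1 := by
  rcases lt_or_ge i p.length with h | h
  · rw [height_succ h]; split <;> omega
  · rw [height_of_length_le h, height_of_length_le (by omega : p.length ≤ i + 1)]; omega

lemma lt_length_of_height_succ {p : List Bool} {i : ℕ}
    (h : height p i + 1 = height p (i + 1)) : i < p.length := by
  by_contra! hi
  rw [height_of_length_le hi, height_of_length_le (by omega : p.length ≤ i + 1)] at h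
  omega

lemma eq_of_height_eq {p q : List Bool} (hlen : p.length = q.length)
    (h : ∀ i, height p i = height q i) : p = q := by
  refine List.ext_getElem hlen fun i hp hq => ?_
  have hi := h (i + 1)
  rw [height_succ hp, height_succ hq, h i] at hi
  revert hi
  cases p[i] <;> cases q[i] <;> simp

lemma height_append (l₁ l₂ : List Bool) (i : ℕ) :
    height (l₁ ++ l₂) i = height l₁ i + height l₂ (i - l₁.length) := by
  simp only [height, List.take_append, List.count_append]
  push_cast
  ring

lemma height_take (l : List Bool) (k i : ℕ) : height (l.take k) i = height l (min i k) := by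
  simp only [height, List.take_take]

lemma height_drop (l : List Bool) (a k : ℕ) :
    height (l.drop a) k = height l (a + k) - height l a := by
  simp only [height, List.take_add, List.count_append]
  push_cast
  ring

lemma height_map_not (l : List Bool) (i : ℕ) : height (l.map not) i = -height l i := by
  have hcount (b : Bool) : ((l.take i).map not).count (!b) = (l.take i).count b :=
    List.count_map_of_injective _ _ Bool.not_injective b
  simp only [height, ← List.map_take]
  rw [← hcount true, ← hcount false, Bool.not_true, Bool.not_false]
  ring

lemma exists_height_succ_eq {p : List Bool} {i₀ i₁ : ℕ} {T : ℤ} (h : i₀ ≤ i₁)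
    (h₀ : height p i₀ < T) (h₁ : T ≤ height p i₁) :
    ∃ j, i₀ ≤ j ∧ j < i₁ ∧ height p j + 1 = T ∧ height p (j + 1) = T := by
  induction i₁, h using Nat.le_induction with
  | base => omega
  | succ k hk ih =>
    by_cases hT : T ≤ height p k
    · obtain ⟨j, hj, hjk, hjT⟩ := ih hT
      exact ⟨j, hj, by omega, hjT⟩
    · have := height_succ_le p k
      exact ⟨k, hk, by omega, by omega, by omega⟩

def flipSeg (a b : ℕ) (p : List Bool) : List Bool :=
  p.take a ++ ((p.drop a).take (b - a)).map not ++ p.drop b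

lemma length_flipSeg {a b : ℕ} {p : List Bool} (hab : a ≤ b) (hb : b ≤ p.length) :
    (flipSeg a b p).length = p.length := by
  simp [flipSeg]
  omega

lemma height_flipSeg {a b : ℕ} {p : List Bool} (hab : a ≤ b) (hb : b ≤ p.length) (i : ℕ) :
    height (flipSeg a b p) i =
      height p (min i a) - height p (min (max i a) b) + height p a +
        height p (max i b) - height p b := by
  have hX : (p.take a).length = a := by simp; omega
  have hY : (((p.drop a).take (b - a)).map not).length = b - a := by simp; omega
  rw [flipSeg, height_append, height_append, List.length_append, hX, hY, height_take,
    height_map_not, height_take, height_drop, height_drop,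
    show a + min (i - a) (b - a) = min (max i a) b by omega,
    show b + (i - (a + (b - a))) = max i b by omega]
  ring

lemma flipSeg_flipSeg {a b : ℕ} {p : List Bool} (hab : a ≤ b) (hb : b ≤ p.length) :
    flipSeg a b (flipSeg a b p) = p := by
  have hb' : b ≤ (flipSeg a b p).length := by rw [length_flipSeg hab hb]; exact hb
  refine eq_of_height_eq (by rw [length_flipSeg hab hb', length_flipSeg hab hb]) fun i => ?_
  simp only [height_flipSeg hab hb', height_flipSeg hab hb]
  rcases hab.eq_or_lt with rfl | hlt <;>
  · simp only [min_def, max_def]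
    split_ifs <;> omega

lemma isDyckPath_iff {n : ℕ} {p : List Bool} :
    IsDyckPath n p ↔
      p.length = 2 * n ∧ (∀ i, 0 ≤ height p i) ∧ height p p.length = 0 := by
  have hcount := List.count_true_add_count_false p
  simp only [IsDyckPath, height, List.take_of_length_le le_rfl, sub_nonneg, Nat.cast_le]
  constructor
  · rintro ⟨hlen, htrue, hle⟩
    exact ⟨hlen, hle, by omega⟩
  · rintro ⟨hlen, hle, hend⟩
    exact ⟨hlen, by omega, hle⟩

lemma _root_.IsDyckPath.height_nonneg {n : ℕ} {p : List Bool} (hp : IsDyckPath n p) (i : ℕ) :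
    0 ≤ height p i :=
  (isDyckPath_iff.1 hp).2.1 i

lemma _root_.IsDyckPath.height_eq_zero_of_length_le {n : ℕ} {p : List Bool}
    (hp : IsDyckPath n p) {i : ℕ} (hi : p.length ≤ i) : height p i = 0 := by
  rw [height_of_length_le hi, (isDyckPath_iff.1 hp).2.2]

instance finite_isDyckPath_and (n : ℕ) (P : List Bool → Prop) :
    Finite {p : List Bool // IsDyckPath n p ∧ P p} :=
  Set.Finite.to_subtype <| (List.finite_length_eq Bool (2 * n)).subset fun _ hp => hp.1.1

lemma stepHeight_eq_height {p : List Bool} {i : ℕ} (h : 0 ≤ height p (i + 1)) :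
    (stepHeight p i : ℤ) = height p (i + 1) := by
  simp only [height, sub_nonneg, Nat.cast_le] at h
  rw [stepHeight, Nat.cast_sub h, height]

def upStepSet (m c : ℕ) (p : List Bool) : Finset ℕ :=
  (Finset.range p.length).filter (fun i => p.getD i false = true ∧ stepHeight p i % m = c)

lemma upStepsMod_eq_card (m c : ℕ) (p : List Bool) :
    upStepsMod m c p = (upStepSet m c p).card :=
  rfl

lemma mem_upStepSet_iff {m c : ℕ} {p : List Bool} (hp : ∀ i, 0 ≤ height p i) {j : ℕ} :
    j ∈ upStepSet m c p ↔ height p j + 1 = height p (j + 1) ∧ height p (j + 1) % m = c := by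
  have hup {j : ℕ} (hj : j < p.length) :
      p.getD j false = true ↔ height p j + 1 = height p (j + 1) := by
    rw [List.getD_eq_getElem _ _ hj, height_succ hj]
    cases p[j] <;> simp
  rw [upStepSet, Finset.mem_filter, Finset.mem_range, ← Int.natCast_inj, Int.natCast_mod,
    stepHeight_eq_height (hp _)]
  constructor
  · rintro ⟨hj, hstep, hmod⟩
    exact ⟨(hup hj).1 hstep, hmod⟩
  · rintro ⟨hstep, hmod⟩
    have hj := lt_length_of_height_succ hstep
    exact ⟨hj, (hup hj).2 hstep, hmod⟩

lemma upStepsMod_eq_zero_iff {m n h : ℕ} {p : List Bool} (hp : IsDyckPath n p) (h0 : 0 < h)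
    (hm : h ≤ m) : upStepsMod m (h % m) p = 0 ↔ ∀ i, height p i < h := by
  rw [upStepsMod_eq_card, Finset.card_eq_zero, Finset.eq_empty_iff_forall_notMem]
  simp only [mem_upStepSet_iff hp.height_nonneg, not_and]
  constructor
  · intro hnone i
    by_contra! hi
    obtain ⟨j, -, -, hstep, hj⟩ := exists_height_succ_eq (Nat.zero_le i) (by simpa) hi
    exact hnone j (hstep.trans hj.symm) (by rw [hj, Int.natCast_mod])
  · intro hlt j hstep hmod
    have := hp.height_nonneg j
    have := hlt (j + 1)
    rw [Int.emod_eq_of_lt (by omega) (by omega)] at hmod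
    rcases hm.lt_or_eq with hm | rfl
    · rw [Nat.mod_eq_of_lt hm] at hmod
      omega
    · rw [Nat.mod_self] at hmod
      omega

lemma upStepsMod_zero_eq_zero_iff {n L : ℕ} {p : List Bool} (hp : IsDyckPath n p) :
    upStepsMod (L + 1) 0 p = 0 ↔ ∀ i, height p i ≤ L := by
  simpa [Int.lt_add_one_iff] using upStepsMod_eq_zero_iff hp L.succ_pos le_rfl

lemma upStepsMod_self_eq_zero_iff {n L : ℕ} {p : List Bool} (hp : IsDyckPath n p)
    (hL : 0 < L) : upStepsMod (L + 1) L p = 0 ↔ ∀ i, height p i < L := by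
  simpa [Nat.mod_eq_of_lt] using upStepsMod_eq_zero_iff hp hL L.le_succ

section Reflection

variable {n L : ℕ} {p : List Bool}

/-- The bound `i ≤ p.length` keeps `sSup (reachSet L p)` from being the junk value of an
unbounded set. -/
def reachSet (L : ℕ) (p : List Bool) : Set ℕ :=
  {i | i ≤ p.length ∧ (L : ℤ) ≤ height p i}

noncomputable def firstReach (L : ℕ) (p : List Bool) : ℕ := sInf (reachSet L p)

noncomputable def lastReach (L : ℕ) (p : List Bool) : ℕ := sSup (reachSet L p)

lemma bddAbove_reachSet : BddAbove (reachSet L p) := ⟨p.length, fun _ hi => hi.1⟩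

lemma reachSet_nonempty_iff (hp : IsDyckPath n p) (hL : 0 < L) :
    (reachSet L p).Nonempty ↔ ∃ i, (L : ℤ) ≤ height p i := by
  refine ⟨fun ⟨i, hi⟩ => ⟨i, hi.2⟩, fun ⟨i, hi⟩ => ⟨i, ?_, hi⟩⟩
  by_contra! h
  rw [hp.height_eq_zero_of_length_le h.le] at hi
  omega

lemma firstReach_mem (hr : (reachSet L p).Nonempty) : firstReach L p ∈ reachSet L p :=
  Nat.sInf_mem hr

lemma lastReach_mem (hr : (reachSet L p).Nonempty) : lastReach L p ∈ reachSet L p :=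
  Nat.sSup_mem hr bddAbove_reachSet

lemma firstReach_le_lastReach (hr : (reachSet L p).Nonempty) : firstReach L p ≤ lastReach L p :=
  Nat.sInf_le (lastReach_mem hr)

lemma lastReach_le_length : lastReach L p ≤ p.length :=
  csSup_le' fun _ hi => hi.1

lemma height_lt_of_lt_firstReach (hr : (reachSet L p).Nonempty) {i : ℕ}
    (hi : i < firstReach L p) : height p i < L := by
  by_contra! h
  have := (firstReach_mem hr).1
  exact (Nat.sInf_le ⟨by omega, h⟩ : firstReach L p ≤ i).not_gt hi

lemma height_lt_of_lastReach_lt (hp : IsDyckPath n p) (hL : 0 < L) {i : ℕ}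
    (hi : lastReach L p < i) : height p i < L := by
  rcases le_or_gt i p.length with hlen | hlen
  · by_contra! h
    exact (le_csSup bddAbove_reachSet ⟨hlen, h⟩ : i ≤ lastReach L p).not_gt hi
  · rw [hp.height_eq_zero_of_length_le hlen.le]
    omega

lemma firstReach_pos (hL : 0 < L) (hr : (reachSet L p).Nonempty) : 0 < firstReach L p := by
  by_contra! h
  have := (firstReach_mem hr).2
  rw [Nat.le_zero.1 h, height_zero] at this
  omega

lemma height_firstReach (hL : 0 < L) (hr : (reachSet L p).Nonempty) :
    height p (firstReach L p) = L := by
  have hpos := firstReach_pos hL hr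
  have hbefore := height_lt_of_lt_firstReach hr (Nat.sub_one_lt_of_lt hpos)
  have hstep := height_succ_le p (firstReach L p - 1)
  rw [Nat.sub_add_cancel hpos] at hstep
  have := (firstReach_mem hr).2
  omega

lemma height_lastReach (hp : IsDyckPath n p) (hL : 0 < L) (hr : (reachSet L p).Nonempty) :
    height p (lastReach L p) = L := by
  have hafter := height_lt_of_lastReach_lt hp hL (lastReach L p).lt_add_one
  have hstep := height_le_height_succ_add_one p (lastReach L p)
  have := (lastReach_mem hr).2
  omega

lemma firstReach_eq {a : ℕ} (ha : a ∈ reachSet L p) (h : ∀ i < a, height p i < L) :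
    firstReach L p = a :=
  le_antisymm (Nat.sInf_le ha) <| le_csInf ⟨a, ha⟩ fun i hi => by
    by_contra! hia
    exact (h i hia).not_ge hi.2

lemma lastReach_eq {b : ℕ} (hb : b ∈ reachSet L p) (h : ∀ i, b < i → height p i < L) :
    lastReach L p = b :=
  le_antisymm (csSup_le ⟨b, hb⟩ fun i hi => by
    by_contra! hbi
    exact (h i hbi).not_ge hi.2) (le_csSup bddAbove_reachSet hb)

noncomputable def reflectAt (L : ℕ) (p : List Bool) : List Bool :=
  flipSeg (firstReach L p) (lastReach L p) p

lemma length_reflectAt (hr : (reachSet L p).Nonempty) : (reflectAt L p).length = p.length :=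
  length_flipSeg (firstReach_le_lastReach hr) lastReach_le_length

lemma height_reflectAt (hp : IsDyckPath n p) (hL : 0 < L) (hr : (reachSet L p).Nonempty)
    (i : ℕ) : height (reflectAt L p) i =
      if firstReach L p ≤ i ∧ i ≤ lastReach L p then 2 * L - height p i else height p i := by
  have ha := height_firstReach hL hr
  have hb := height_lastReach hp hL hr
  have hab := firstReach_le_lastReach hr
  rw [reflectAt, height_flipSeg hab lastReach_le_length]
  split_ifs with hi
  · rw [min_eq_right hi.1, max_eq_left hi.1, min_eq_left hi.2, max_eq_right hi.2]
    omega
  · obtain h | h : i < firstReach L p ∨ lastReach L p < i := by omega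
    · rw [min_eq_left h.le, max_eq_right h.le, min_eq_left hab, max_eq_right (h.le.trans hab)]
      omega
    · rw [min_eq_right (hab.trans h.le), max_eq_left (hab.trans h.le), min_eq_right h.le,
        max_eq_left h.le]
      omega

lemma height_reflectAt_firstReach (hp : IsDyckPath n p) (hL : 0 < L)
    (hr : (reachSet L p).Nonempty) : height (reflectAt L p) (firstReach L p) = L := by
  rw [height_reflectAt hp hL hr, if_pos ⟨le_rfl, firstReach_le_lastReach hr⟩,
    height_firstReach hL hr]
  ring

lemma firstReach_mem_reachSet_reflectAt (hp : IsDyckPath n p) (hL : 0 < L)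
    (hr : (reachSet L p).Nonempty) : firstReach L p ∈ reachSet L (reflectAt L p) := by
  refine ⟨?_, (height_reflectAt_firstReach hp hL hr).ge⟩
  rw [length_reflectAt hr]
  exact (firstReach_le_lastReach hr).trans lastReach_le_length

lemma firstReach_reflectAt (hp : IsDyckPath n p) (hL : 0 < L) (hr : (reachSet L p).Nonempty) :
    firstReach L (reflectAt L p) = firstReach L p := by
  refine firstReach_eq (firstReach_mem_reachSet_reflectAt hp hL hr) fun i hi => ?_
  rw [height_reflectAt hp hL hr, if_neg (by omega)]
  exact height_lt_of_lt_firstReach hr hi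

lemma lastReach_reflectAt (hp : IsDyckPath n p) (hL : 0 < L) (hr : (reachSet L p).Nonempty) :
    lastReach L (reflectAt L p) = lastReach L p := by
  have hab := firstReach_le_lastReach hr
  refine lastReach_eq ⟨?_, ?_⟩ fun i hi => ?_
  · rw [length_reflectAt hr]
    exact lastReach_le_length
  · rw [height_reflectAt hp hL hr, if_pos ⟨hab, le_rfl⟩, height_lastReach hp hL hr]
    omega
  · rw [height_reflectAt hp hL hr, if_neg (by omega)]
    exact height_lt_of_lastReach_lt hp hL hi

lemma reflectAt_reflectAt (hp : IsDyckPath n p) (hL : 0 < L) (hr : (reachSet L p).Nonempty) :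
    reflectAt L (reflectAt L p) = p := by
  rw [reflectAt, firstReach_reflectAt hp hL hr, lastReach_reflectAt hp hL hr]
  exact flipSeg_flipSeg (firstReach_le_lastReach hr) lastReach_le_length

lemma isDyckPath_reflectAt (hp : IsDyckPath n p) (hL : 0 < L) (hr : (reachSet L p).Nonempty)
    (hle : ∀ i, firstReach L p ≤ i → i ≤ lastReach L p → height p i ≤ 2 * L) :
    IsDyckPath n (reflectAt L p) := by
  obtain ⟨hlen, hnonneg, hend⟩ := isDyckPath_iff.1 hp
  refine isDyckPath_iff.2 ⟨(length_reflectAt hr).trans hlen, fun i => ?_, ?_⟩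
  · rw [height_reflectAt hp hL hr]
    split_ifs with hi
    · linarith [hle i hi.1 hi.2]
    · exact hnonneg i
  · rw [length_reflectAt hr, height_reflectAt hp hL hr, if_neg, hend]
    rintro ⟨-, hle⟩
    rw [← le_antisymm lastReach_le_length hle, height_lastReach hp hL hr] at hend
    omega

lemma reachSet_nonempty_of_upStepsMod_ne_zero (hp : IsDyckPath n p) (hL : 0 < L)
    (h : upStepsMod (L + 1) L p ≠ 0) : (reachSet L p).Nonempty := by
  rw [reachSet_nonempty_iff hp hL]
  by_contra! hlt
  exact h ((upStepsMod_self_eq_zero_iff hp hL).2 hlt)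

lemma emod_eq_iff_of_lt_two_mul {x m r : ℤ} (hx : 0 ≤ x) (hxm : x < 2 * m) (hr : 0 ≤ r)
    (hrm : r < m) : x % m = r ↔ x = r ∨ x = r + m := by
  rcases lt_or_ge x m with h | h
  · rw [Int.emod_eq_of_lt hx h]
    omega
  · rw [Int.emod_eq_sub_self_emod, Int.emod_eq_of_lt (by omega) (by omega)]
    omega

lemma firstReach_sub_one_mem_upStepSet (hp : IsDyckPath n p) (hL : 0 < L)
    (hr : (reachSet L p).Nonempty) : firstReach L p - 1 ∈ upStepSet (L + 1) L p := by
  have hpos := firstReach_pos hL hr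
  have ha := height_firstReach hL hr
  have hbefore := height_lt_of_lt_firstReach hr (Nat.sub_one_lt_of_lt hpos)
  have hstep := height_succ_le p (firstReach L p - 1)
  rw [Nat.sub_add_cancel hpos] at hstep
  rw [mem_upStepSet_iff hp.height_nonneg, Nat.sub_add_cancel hpos, ha]
  exact ⟨by omega, Int.emod_eq_of_lt (by omega) (by omega)⟩

/-- A second up step to a height `≡ L (mod L + 1)` would be forced by a dip below `L`
(climbing back to the last visit of `L`) or by a climb to `2 * L + 1`. -/
lemma upStepsMod_eq_one_iff (hp : IsDyckPath n p) (hL : 0 < L) (hr : (reachSet L p).Nonempty) :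
    upStepsMod (L + 1) L p = 1 ↔
      ∀ i, firstReach L p ≤ i → i ≤ lastReach L p →
        L ≤ height p i ∧ height p i ≤ 2 * L := by
  have hmem := firstReach_sub_one_mem_upStepSet hp hL hr
  have hpos := firstReach_pos hL hr
  have ha := height_firstReach hL hr
  have hmod {x : ℤ} (hx : 0 ≤ x) (hx' : x ≤ 2 * L + 1) :
      x % (L + 1 : ℕ) = L ↔ x = L ∨ x = 2 * L + 1 := by
    rw [emod_eq_iff_of_lt_two_mul hx (by omega) (by omega) (by omega)]
    omega
  have hcard :
      upStepsMod (L + 1) L p = 1 ↔ ∀ j ∈ upStepSet (L + 1) L p, j = firstReach L p - 1 :=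
    ⟨fun h j hj => Finset.card_le_one.1 h.le j hj _ hmem,
      fun h => Finset.card_eq_one.2 ⟨_, Finset.eq_singleton_iff_unique_mem.2 ⟨hmem, h⟩⟩⟩
  simp only [hcard, mem_upStepSet_iff hp.height_nonneg]
  constructor
  · intro huniq i hai hib
    constructor
    · by_contra! hlow
      obtain ⟨j, hij, -, hstep, hj⟩ :=
        exists_height_succ_eq hib hlow (height_lastReach hp hL hr).ge
      have := huniq j ⟨hstep.trans hj.symm, (hmod (by omega) (by omega)).2 (.inl hj)⟩
      omega
    · by_contra! hhigh
      obtain ⟨j, haj, -, hstep, hj⟩ :=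
        exists_height_succ_eq (p := p) (T := 2 * L + 1) hai (by omega) (by omega)
      have := huniq j ⟨hstep.trans hj.symm, (hmod (by omega) (by omega)).2 (.inr hj)⟩
      omega
  · rintro hband j ⟨hstep, hj⟩
    have hx := hp.height_nonneg (j + 1)
    by_contra hne
    obtain h | h | h : j + 1 < firstReach L p ∨ lastReach L p < j + 1 ∨
        (firstReach L p ≤ j ∧ j + 1 ≤ lastReach L p) := by omega
    · have := height_lt_of_lt_firstReach hr h
      have := (hmod hx (by omega)).1 hj
      omega
    · have := height_lt_of_lastReach_lt hp hL h
      have := (hmod hx (by omega)).1 hj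
      omega
    · have := (hband j h.1 (by omega)).1
      have := (hband (j + 1) (by omega) h.2).2
      have := (hmod hx (by omega)).1 hj
      omega

lemma reflectAt_upStepsMod_eq_one (hp : IsDyckPath n p) (hL : 0 < L)
    (hr : (reachSet L p).Nonempty) (hle : ∀ i, height p i ≤ L) :
    IsDyckPath n (reflectAt L p) ∧ upStepsMod (L + 1) L (reflectAt L p) = 1 := by
  have hq := isDyckPath_reflectAt hp hL hr fun i _ _ => by linarith [hle i]
  refine ⟨hq, ?_⟩
  rw [upStepsMod_eq_one_iff hq hL ⟨_, firstReach_mem_reachSet_reflectAt hp hL hr⟩,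
    firstReach_reflectAt hp hL hr, lastReach_reflectAt hp hL hr]
  intro i hai hib
  rw [height_reflectAt hp hL hr, if_pos ⟨hai, hib⟩]
  constructor <;> linarith [hle i, hp.height_nonneg i]

lemma reflectAt_upStepsMod_eq_zero (hp : IsDyckPath n p) (hL : 0 < L)
    (h : upStepsMod (L + 1) L p = 1) :
    IsDyckPath n (reflectAt L p) ∧ upStepsMod (L + 1) 0 (reflectAt L p) = 0 ∧
      upStepsMod (L + 1) L (reflectAt L p) ≠ 0 := by
  have hr := reachSet_nonempty_of_upStepsMod_ne_zero hp hL (by omega)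
  have hband := (upStepsMod_eq_one_iff hp hL hr).1 h
  have hq := isDyckPath_reflectAt hp hL hr fun i hai hib => (hband i hai hib).2
  refine ⟨hq, (upStepsMod_zero_eq_zero_iff hq).2 fun i => ?_, ?_⟩
  · rw [height_reflectAt hp hL hr]
    split_ifs with hi
    · linarith [(hband i hi.1 hi.2).1]
    · obtain h | h : i < firstReach L p ∨ lastReach L p < i := by omega
      · exact (height_lt_of_lt_firstReach hr h).le
      · exact (height_lt_of_lastReach_lt hp hL h).le
  · rw [Ne, upStepsMod_self_eq_zero_iff hq hL]
    exact fun hlt => (hlt _).ne (height_reflectAt_firstReach hp hL hr)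

end Reflection

noncomputable def reflectEquiv (n : ℕ) {L : ℕ} (hL : 0 < L) :
    {p : List Bool //
        IsDyckPath n p ∧ upStepsMod (L + 1) 0 p = 0 ∧ upStepsMod (L + 1) L p ≠ 0} ≃
      {p : List Bool // IsDyckPath n p ∧ upStepsMod (L + 1) L p = 1} where
  toFun p := ⟨reflectAt L p, reflectAt_upStepsMod_eq_one p.2.1 hL
    (reachSet_nonempty_of_upStepsMod_ne_zero p.2.1 hL p.2.2.2)
    ((upStepsMod_zero_eq_zero_iff p.2.1).1 p.2.2.1)⟩
  invFun p := ⟨reflectAt L p, reflectAt_upStepsMod_eq_zero p.2.1 hL p.2.2⟩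
  left_inv p := Subtype.ext <| reflectAt_reflectAt p.2.1 hL <|
    reachSet_nonempty_of_upStepsMod_ne_zero p.2.1 hL p.2.2.2
  right_inv p := Subtype.ext <| reflectAt_reflectAt p.2.1 hL <|
    reachSet_nonempty_of_upStepsMod_ne_zero p.2.1 hL (by rw [p.2.2]; exact one_ne_zero)

end DyckPath

open DyckPath in
theorem upSteps_mod_m_zero_case_general (m n : ℕ) (hm : 2 ≤ m) :
    Nat.card {p : List Bool // IsDyckPath n p ∧ upStepsMod m 0 p = 0} =
      Nat.card {p : List Bool // IsDyckPath n p ∧ upStepsMod m (m - 1) p = 0} +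
        Nat.card {p : List Bool // IsDyckPath n p ∧ upStepsMod m (m - 1) p = 1} := by
  classical
  obtain ⟨L, rfl⟩ : ∃ L, m = L + 1 := ⟨m - 1, by omega⟩
  have hL : 0 < L := by omega
  rw [Nat.add_sub_cancel, ← Nat.card_congr (reflectEquiv n hL), ← Nat.card_sum]
  refine Nat.card_congr ((Equiv.subtypeEquivRight fun p => ?_).trans
    (subtypeOrEquiv _ _ (Pi.disjoint_iff.2 fun p => Prop.disjoint_iff.2 (by tauto))))
  have hmono (hp : IsDyckPath n p) (h : upStepsMod (L + 1) L p = 0) :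
      upStepsMod (L + 1) 0 p = 0 :=
    (upStepsMod_zero_eq_zero_iff hp).2 fun i => ((upStepsMod_self_eq_zero_iff hp hL).1 h i).le
  tauto

/-- For `m ≥ 2`, the number of Dyck paths of semilength `n` with no up steps at height
`h ≡ 0 (mod m)` equals the number with no up steps at height `h ≡ m-1 (mod m)` plus
the number with exactly one up step at height `h ≡ m-1 (mod m)`. -/
theorem upSteps_mod_m_zero_case (m n : ℕ) (hm : 2 ≤ m) (hn : 1 ≤ n) :
    Nat.card {p : List Bool // IsDyckPath n p ∧ upStepsMod m 0 p = 0} =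
      Nat.card {p : List Bool // IsDyckPath n p ∧ upStepsMod m (m - 1) p = 0} +
        Nat.card {p : List Bool // IsDyckPath n p ∧ upStepsMod m (m - 1) p = 1} :=
  upSteps_mod_m_zero_case_general m n hm
end

section
/- For every m ≥ 2 and n ≥ 1, the number of Dyck paths of semilength n with no up steps at height h ≡ m-1 (mod m) equals the number of Dyck paths of semilength n whose height is at most m-2. -/
def HeightLE (p : List Bool) (H : ℕ) : Prop :=
  ∀ i, (p.take i).count true ≤ (p.take i).count false + H

lemma count_take_succ {p : List Bool} {i : ℕ} (hi : i < p.length) (b : Bool) :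
    (p.take (i + 1)).count b = (p.take i).count b + if p.getD i false = b then 1 else 0 := by
  rw [List.take_add_one, List.count_append, List.getElem?_eq_getElem hi,
    List.getD_eq_getElem _ _ hi]
  simp [List.count_singleton']

lemma upStepsMod_eq_zero_iff {m c : ℕ} {p : List Bool} :
    upStepsMod m c p = 0 ↔
      ∀ i < p.length, p.getD i false = true → stepHeight p i % m ≠ c := by
  simp only [upStepsMod, Finset.card_eq_zero, Finset.filter_eq_empty_iff, Finset.mem_range,
    not_and]

lemma stepHeight_le_of_heightLE {p : List Bool} {H : ℕ} (h : HeightLE p H) (i : ℕ) :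
    stepHeight p i ≤ H := by
  have := h (i + 1)
  unfold stepHeight
  omega

lemma heightLE_of_forall_up_stepHeight_ne {p : List Bool} {H : ℕ}
    (h : ∀ i < p.length, p.getD i false = true → stepHeight p i ≠ H + 1) :
    HeightLE p H := by
  intro i
  induction i with
  | zero => simp
  | succ i ih =>
    by_cases hi : i < p.length
    · have hup := count_take_succ hi true
      have hdown := count_take_succ hi false
      cases hb : p.getD i false
      · simp only [hb, reduceIte, Bool.false_eq_true, add_zero] at hup hdown
        omega
      · simp only [hb, reduceIte, Bool.true_eq_false, add_zero] at hup hdown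
        have hne := h i hi hb
        unfold stepHeight at hne
        omega
    · have hprefix : p.take (i + 1) = p.take i := by
        rw [List.take_of_length_le (by omega), List.take_of_length_le (by omega)]
      rwa [hprefix]

lemma upStepsMod_pred_eq_zero_iff_heightLE {m : ℕ} (hm : 2 ≤ m) (p : List Bool) :
    upStepsMod m (m - 1) p = 0 ↔ HeightLE p (m - 2) := by
  rw [upStepsMod_eq_zero_iff]
  constructor
  · refine fun h => heightLE_of_forall_up_stepHeight_ne fun i hi hup hs => h i hi hup ?_
    rw [hs, Nat.mod_eq_of_lt (by omega)]
    omega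
  · intro h i _ _
    have hs := stepHeight_le_of_heightLE h i
    rw [Nat.mod_eq_of_lt (by omega)]
    omega

theorem no_upSteps_mod_m_eq_bounded_height_general (m n : ℕ) (hm : 2 ≤ m) :
    Nat.card {p : List Bool // IsDyckPath n p ∧ upStepsMod m (m - 1) p = 0} =
      Nat.card {p : List Bool // IsDyckPath n p ∧ HeightLE p (m - 2)} :=
  Nat.card_congr <| Equiv.subtypeEquivRight fun p =>
    and_congr_right fun _ => upStepsMod_pred_eq_zero_iff_heightLE hm p

/-- For `m ≥ 2`, the number of Dyck paths of semilength `n` with no up steps at height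
`h ≡ m-1 (mod m)` equals the number of Dyck paths of semilength `n` of height at most
`m - 2`. -/
theorem no_upSteps_mod_m_eq_bounded_height (m n : ℕ) (hm : 2 ≤ m) (hn : 1 ≤ n) :
    Nat.card {p : List Bool // IsDyckPath n p ∧ upStepsMod m (m - 1) p = 0} =
      Nat.card {p : List Bool // IsDyckPath n p ∧ HeightLE p (m - 2)} :=
  no_upSteps_mod_m_eq_bounded_height_general m n hm
end

section
/- For every m ≥ 2, n ≥ 1, j ≥ 1 and k ≥ 0, the number of Dyck paths of semilength n with exactly j up steps at height h ≡ m-1 (mod m) and exactly k up steps at height h ≡ 0 (mod m) equals the number of Dyck paths of semilength n with exactly k+1 up steps at height h ≡ m-1 (mod m) and exactly j-1 up steps at height h ≡ 0 (mod m). -/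
/-!
Call the heights `h ≡ -1 (mod m)` levels. An up step is counted by `upStepsMod m (m - 1)` when it
ends on a level and by `upStepsMod m 0` when it starts on one. Cut the path at its visits to the
levels: an initial climb to height `m - 1`, then segments, each leaving a level and stopping at the
next level it meets, and a final descent that meets no level. Inside a segment no step touches a
level, so a segment contributes its last step to the first count and its first step to the second.
A segment climbing or falling to the adjacent level contributes equally to both; a loop, returning
to its own level, goes up and comes down or vice versa. Reflecting every loop in its level is
therefore an involution that swaps the two counts of all segments; it keeps the path nonnegative
because a loop stays within distance `m` of its level `L ≥ m - 1`. The initial climb contributes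
one step ending on a level and none starting on one, whence the shift by one.
-/

namespace BoolWalk

variable {m : ℕ}

def step (b : Bool) : ℤ := if b then 1 else -1

@[simp] lemma step_true : step true = 1 := rfl

@[simp] lemma step_false : step false = -1 := rfl

@[simp] lemma step_not (b : Bool) : step (!b) = -step b := by cases b <;> rfl

def height (l : List Bool) : ℤ := (l.map step).sum

@[simp] lemma height_nil : height [] = 0 := rfl

@[simp] lemma height_cons (x : Bool) (l : List Bool) : height (x :: l) = step x + height l := by
  simp [height]

@[simp] lemma height_append (l₁ l₂ : List Bool) :
    height (l₁ ++ l₂) = height l₁ + height l₂ := by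
  simp [height]

@[simp] lemma height_map_not (l : List Bool) : height (l.map not) = -height l := by
  induction l with
  | nil => rfl
  | cons x l ih => simp [ih]; ring

lemma height_eq_count_sub_count (l : List Bool) :
    height l = l.count true - l.count false := by
  induction l with
  | nil => rfl
  | cons x l ih => cases x <;> simp [ih] <;> omega

/-- The starting height `u` itself is not tested. -/
def AllHeights (P : ℤ → Prop) : ℤ → List Bool → Prop
  | _, [] => True
  | u, x :: r => P (u + step x) ∧ AllHeights P (u + step x) r

section AllHeights

variable {P Q : ℤ → Prop}

@[simp] lemma allHeights_nil (u : ℤ) : AllHeights P u [] := trivial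

@[simp] lemma allHeights_cons (u : ℤ) (x : Bool) (r : List Bool) :
    AllHeights P u (x :: r) ↔ P (u + step x) ∧ AllHeights P (u + step x) r := Iff.rfl

lemma allHeights_append (u : ℤ) (s t : List Bool) :
    AllHeights P u (s ++ t) ↔ AllHeights P u s ∧ AllHeights P (u + height s) t := by
  induction s generalizing u with
  | nil => simp
  | cons x s ih => simp [ih, and_assoc, add_assoc]

lemma AllHeights.imp (hPQ : ∀ h, P h → Q h) {u : ℤ} {p : List Bool} (hp : AllHeights P u p) :
    AllHeights Q u p := by
  induction p generalizing u with
  | nil => trivial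
  | cons x r ih => exact ⟨hPQ _ hp.1, ih hp.2⟩

lemma AllHeights.final {u : ℤ} {p : List Bool} (hu : P u) (hp : AllHeights P u p) :
    P (u + height p) := by
  induction p generalizing u with
  | nil => simpa using hu
  | cons x r ih => simpa [add_assoc] using ih hp.1 hp.2

lemma AllHeights.of_append_cons {u : ℤ} {s r : List Bool} {x : Bool}
    (h : AllHeights P u (s ++ x :: r)) : P (u + height s + step x) :=
  ((allHeights_append u s _).1 h).2.1

lemma allHeights_map_not (u v : ℤ) (s : List Bool) :
    AllHeights P u (s.map not) ↔ AllHeights (fun h => P (u + v - h)) v s := by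
  induction s generalizing u v with
  | nil => simp
  | cons x s ih =>
    have hc : u + -step x + (v + step x) = u + v := by ring
    have hx : u + v - (v + step x) = u + -step x := by ring
    simp only [List.map_cons, allHeights_cons, step_not, ih (u + -step x) (v + step x), hc, hx]

lemma allHeights_nonneg_iff {u : ℤ} (hu : 0 ≤ u) (p : List Bool) :
    AllHeights (0 ≤ ·) u p ↔ ∀ i, 0 ≤ u + height (p.take i) := by
  induction p generalizing u with
  | nil => simpa using hu
  | cons x r ih =>
    constructor
    · rintro ⟨hx, hr⟩ (_ | i)
      · simpa using hu
      · simpa [add_assoc] using (ih hx).1 hr i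
    · intro h
      have hx : 0 ≤ u + step x := by simpa using h 1
      exact ⟨hx, (ih hx).2 fun i => by simpa [add_assoc] using h (i + 1)⟩

end AllHeights

def upCount (P : ℤ → Prop) [DecidablePred P] : ℤ → List Bool → ℕ
  | _, [] => 0
  | u, x :: r => (if x = true ∧ P (u + 1) then 1 else 0) + upCount P (u + step x) r

section upCount

variable {P Q : ℤ → Prop} [DecidablePred P] [DecidablePred Q]

@[simp] lemma upCount_nil (u : ℤ) : upCount P u [] = 0 := rfl

@[simp] lemma upCount_cons (u : ℤ) (x : Bool) (r : List Bool) :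
    upCount P u (x :: r) = (if x = true ∧ P (u + 1) then 1 else 0) + upCount P (u + step x) r :=
  rfl

lemma upCount_append (u : ℤ) (s t : List Bool) :
    upCount P u (s ++ t) = upCount P u s + upCount P (u + height s) t := by
  induction s generalizing u with
  | nil => simp
  | cons x s ih => simp [ih, add_assoc]

lemma upCount_congr {u : ℤ} {p : List Bool} (h : AllHeights (fun h => P h ↔ Q h) u p) :
    upCount P u p = upCount Q u p := by
  induction p generalizing u with
  | nil => rfl
  | cons x r ih => cases x <;> simp_all

lemma upCount_eq_zero {u : ℤ} {p : List Bool} (h : AllHeights (¬P ·) u p) :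
    upCount P u p = 0 := by
  induction p generalizing u with
  | nil => rfl
  | cons x r ih => cases x <;> simp_all

lemma card_filter_eq_upCount (u : ℤ) (p : List Bool) :
    ((Finset.range p.length).filter
      (fun i => p.getD i false = true ∧ P (u + height (p.take (i + 1))))).card =
      upCount P u p := by
  induction p generalizing u with
  | nil => rfl
  | cons x r ih =>
    rw [upCount_cons, ← ih (u + step x)]
    simp only [Finset.card_filter, List.length_cons, Finset.sum_range_succ']
    cases x <;> simp [add_assoc, Nat.add_comm]

end upCount

def IsLevel (m : ℕ) (h : ℤ) : Prop := (m : ℤ) ∣ h + 1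

instance (m : ℕ) : DecidablePred (IsLevel m) :=
  fun h => inferInstanceAs (Decidable ((m : ℤ) ∣ h + 1))

lemma IsLevel.reflect {L : ℤ} (hL : IsLevel m L) (h : ℤ) :
    IsLevel m (L + L - h) ↔ IsLevel m h := by
  rw [IsLevel, show L + L - h + 1 = 2 * (L + 1) - (h + 1) by ring]
  exact dvd_sub_right (dvd_mul_of_dvd_right hL 2)

lemma IsLevel.le_add_one {L : ℤ} (hL : IsLevel m L) (h0 : 0 ≤ L) : (m : ℤ) ≤ L + 1 :=
  Int.le_of_dvd (by omega) hL

lemma not_isLevel_of_mem_strip {lo h : ℤ} (hlo : (m : ℤ) ∣ lo) (h₁ : lo ≤ h)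
    (h₂ : h ≤ lo + m - 2) : ¬IsLevel m h := fun hh => by
  have := Int.le_of_dvd (by omega) (dvd_sub hh hlo)
  omega

lemma isLevel_add_step_iff {lo h : ℤ} (hlo : (m : ℤ) ∣ lo) (h₁ : lo ≤ h)
    (h₂ : h ≤ lo + m - 2) (y : Bool) :
    IsLevel m (h + step y) ↔ y = true ∧ h = lo + m - 2 ∨ y = false ∧ h = lo := by
  cases y
  · suffices IsLevel m (h - 1) ↔ h = lo by simpa [sub_eq_add_neg] using this
    refine ⟨fun hl => ?_, fun e => by simpa [IsLevel, e] using hlo⟩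
    by_contra hne
    exact not_isLevel_of_mem_strip hlo (by omega) (by omega) hl
  · suffices IsLevel m (h + 1) ↔ h = lo + m - 2 by simpa using this
    refine ⟨fun hl => ?_, fun e => ?_⟩
    · by_contra hne
      exact not_isLevel_of_mem_strip hlo (by omega) (by omega) hl
    · rw [IsLevel, e, show lo + m - 2 + 1 + 1 = lo + m by ring]
      exact dvd_add hlo (dvd_refl _)

lemma AllHeights.strip {lo v : ℤ} {w : List Bool} (hlo : (m : ℤ) ∣ lo) (hv₁ : lo ≤ v)
    (hv₂ : v ≤ lo + m - 2) (hw : AllHeights (¬IsLevel m ·) v w) :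
    AllHeights (fun h => lo ≤ h ∧ h ≤ lo + m - 2) v w := by
  induction w generalizing v with
  | nil => trivial
  | cons y r ih =>
    obtain ⟨hy, hr⟩ := hw
    have hy' : lo ≤ v + step y ∧ v + step y ≤ lo + m - 2 := by
      rw [isLevel_add_step_iff hlo hv₁ hv₂] at hy
      cases y <;> simp at hy ⊢ <;> omega
    exact ⟨hy', ih hy'.1 hy'.2 hr⟩

lemma IsLevel.not_isLevel_add_step (hm : 2 ≤ m) {h : ℤ} (hh : IsLevel m h) (y : Bool) :
    ¬IsLevel m (h + step y) := fun hy => by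
  have hd : (m : ℤ) ∣ step y := by simpa using dvd_sub hy hh
  have h1 : (m : ℤ) ∣ 1 := by cases y <;> simpa using hd
  have := Int.le_of_dvd one_pos h1
  omega

lemma not_isLevel_zero (hm : 2 ≤ m) : ¬IsLevel m 0 := by
  simpa using IsLevel.not_isLevel_add_step hm (h := -1) (by simp [IsLevel]) true

lemma upCount_dvd_eq_zero {v : ℤ} {w : List Bool} (hv : ¬IsLevel m v)
    (hw : AllHeights (¬IsLevel m ·) v w) : upCount (fun h => (m : ℤ) ∣ h) v w = 0 := by
  induction w generalizing v with
  | nil => rfl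
  | cons y r ih => simp [ih hw.1 hw.2, show ¬(m : ℤ) ∣ v + 1 from hv]

def flipLoop (s : List Bool) : List Bool := if height s = 0 then s.map not else s

@[simp] lemma length_flipLoop (s : List Bool) : (flipLoop s).length = s.length := by
  unfold flipLoop; split_ifs <;> simp

@[simp] lemma height_flipLoop (s : List Bool) : height (flipLoop s) = height s := by
  unfold flipLoop; split_ifs with h <;> simp [h]

lemma flipLoop_flipLoop (s : List Bool) : flipLoop (flipLoop s) = s := by
  unfold flipLoop; split_ifs <;> simp_all [Function.comp_def]

section Segment

/-! A segment from the level `L` is a walk `s ++ [x]` that avoids the levels except at its end. -/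

variable {L : ℤ} {s w : List Bool} {x y : Bool}

lemma segment_bounds_and_height_eq_zero_iff (hm : 2 ≤ m) (hL : IsLevel m L)
    (hs : AllHeights (¬IsLevel m ·) L (y :: w))
    (hx : IsLevel m (L + height (y :: w) + step x)) :
    AllHeights (fun h => L - m < h ∧ h < L + m) L (y :: w) ∧
      (height (y :: w ++ [x]) = 0 ↔ y ≠ x) := by
  obtain ⟨-, hw⟩ := hs
  rw [height_cons, ← add_assoc] at hx
  have key : ∀ lo : ℤ, (m : ℤ) ∣ lo → lo ≤ L + step y → L + step y ≤ lo + m - 2 →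
      AllHeights (fun h => lo ≤ h ∧ h ≤ lo + m - 2) (L + step y) w ∧
        (x = true ∧ L + step y + height w = lo + m - 2 ∨
          x = false ∧ L + step y + height w = lo) :=
    fun lo hlo h₁ h₂ => by
      have hst := hw.strip hlo h₁ h₂
      have he := hst.final ⟨h₁, h₂⟩
      exact ⟨hst, (isLevel_add_step_iff hlo he.1 he.2 x).1 hx⟩
  cases y
  · obtain ⟨hst, he⟩ :=
      key (L + 1 - m) (dvd_sub hL (dvd_refl _)) (by simp; omega) (by simp; omega)
    refine ⟨⟨by simp; omega, hst.imp fun h hh => by omega⟩, ?_⟩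
    cases x <;> simp at he ⊢ <;> omega
  · obtain ⟨hst, he⟩ := key (L + 1) hL (by simp) (by simp; omega)
    refine ⟨⟨by simp; omega, hst.imp fun h hh => by omega⟩, ?_⟩
    cases x <;> simp at he ⊢ <;> omega

lemma segment_upCount (hm : 2 ≤ m) (hL : IsLevel m L)
    (hs : AllHeights (¬IsLevel m ·) L (y :: w))
    (hx : IsLevel m (L + height (y :: w) + step x)) :
    upCount (IsLevel m) L (y :: w ++ [x]) = x.toNat ∧
      upCount (fun h => (m : ℤ) ∣ h) L (y :: w ++ [x]) = y.toNat := by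
  have hL' : (m : ℤ) ∣ L + 1 := hL
  have hlast : ¬(m : ℤ) ∣ L + height (y :: w) + 1 := fun h =>
    IsLevel.not_isLevel_add_step hm h x hx
  refine ⟨?_, ?_⟩
  · rw [upCount_append, upCount_eq_zero hs]
    cases x <;> simp_all
  · rw [upCount_append, upCount_cons, upCount_dvd_eq_zero hs.1 hs.2]
    cases x <;> cases y <;> simp_all

lemma AllHeights.map_not_of_isLevel (hL : IsLevel m L) (hs : AllHeights (¬IsLevel m ·) L s) :
    AllHeights (¬IsLevel m ·) L (s.map not) :=
  (allHeights_map_not L L s).2 (hs.imp fun h hh => by rwa [hL.reflect])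

lemma flipLoop_segment (hs : AllHeights (¬IsLevel m ·) L s)
    (hx : IsLevel m (L + height s + step x)) :
    ∃ s' x', flipLoop (s ++ [x]) = s' ++ [x'] ∧ AllHeights (¬IsLevel m ·) L s' ∧
      L + height s' + step x' = L + height s + step x := by
  unfold flipLoop
  split_ifs with h0
  · have hend : L + height s + step x = L := by simp at h0; omega
    have hL : IsLevel m L := hend ▸ hx
    refine ⟨s.map not, !x, by simp, ?_, by simp; omega⟩
    exact hs.map_not_of_isLevel hL
  · exact ⟨s, x, rfl, hs, rfl⟩

lemma upCount_flipLoop_segment (hm : 2 ≤ m) (hL : IsLevel m L)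
    (hs : AllHeights (¬IsLevel m ·) L s) (hx : IsLevel m (L + height s + step x)) :
    upCount (IsLevel m) L (flipLoop (s ++ [x])) =
        upCount (fun h => (m : ℤ) ∣ h) L (s ++ [x]) ∧
      upCount (fun h => (m : ℤ) ∣ h) L (flipLoop (s ++ [x])) =
        upCount (IsLevel m) L (s ++ [x]) := by
  obtain _ | ⟨y, w⟩ := s
  · exact (IsLevel.not_isLevel_add_step hm hL x (by simpa using hx)).elim
  obtain ⟨-, hloop⟩ := segment_bounds_and_height_eq_zero_iff hm hL hs hx
  obtain ⟨hA, hB⟩ := segment_upCount hm hL hs hx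
  rw [hA, hB]
  unfold flipLoop
  split_ifs with h0
  · have hend : L + height ((!y) :: w.map not) + step (!x) = L + height (y :: w) + step x := by
      simp at h0 ⊢; omega
    have hs' := hs.map_not_of_isLevel hL
    obtain ⟨hA', hB'⟩ := segment_upCount hm hL hs' (hend ▸ hx)
    simp only [List.map_append, List.map_cons, List.map_nil] at hA' hB' ⊢
    rw [hA', hB']
    cases x <;> cases y <;> simp_all
  · cases x <;> cases y <;> simp_all

lemma allHeights_nonneg_flipLoop (hm : 2 ≤ m) (hs : AllHeights (¬IsLevel m ·) L s)
    (hx : IsLevel m (L + height s + step x)) (hn : AllHeights (0 ≤ ·) L (s ++ [x])) :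
    AllHeights (0 ≤ ·) L (flipLoop (s ++ [x])) := by
  unfold flipLoop
  split_ifs with h0
  · have hend : L + height s + step x = L := by simp at h0; omega
    have hL : IsLevel m L := hend ▸ hx
    have hL0 : 0 ≤ L := (by simpa [allHeights_append, hend] using hn : _ ∧ 0 ≤ L).2
    have hmL := hL.le_add_one hL0
    obtain _ | ⟨y, w⟩ := s
    · exact (IsLevel.not_isLevel_add_step hm hL x (by simpa using hx)).elim
    obtain ⟨hb, -⟩ := segment_bounds_and_height_eq_zero_iff hm hL hs hx
    refine (allHeights_map_not L L _).2
      ((allHeights_append _ _ _).2 ⟨hb.imp fun h hh => ?_, ?_⟩)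
    · omega
    · simp only [allHeights_cons, allHeights_nil, and_true]
      omega
  · exact hn

end Segment

lemma exists_first_isLevel (m : ℕ) (u : ℤ) (p : List Bool) :
    AllHeights (¬IsLevel m ·) u p ∨
      ∃ s x r, p = s ++ x :: r ∧ AllHeights (¬IsLevel m ·) u s ∧
        IsLevel m (u + height s + step x) := by
  induction p generalizing u with
  | nil => exact .inl trivial
  | cons y q ih =>
    by_cases hy : IsLevel m (u + step y)
    · exact .inr ⟨[], y, q, rfl, trivial, by simpa using hy⟩
    rcases ih (u + step y) with hq | ⟨s, x, r, rfl, hs, hx⟩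
    · exact .inl ⟨hy, hq⟩
    · exact .inr ⟨y :: s, x, r, rfl, ⟨hy, hs⟩, by simpa [add_assoc] using hx⟩

theorem walk_induction (m : ℕ) {motive : ℤ → List Bool → Prop}
    (tail : ∀ u t, AllHeights (¬IsLevel m ·) u t → motive u t)
    (segment : ∀ u s x r, AllHeights (¬IsLevel m ·) u s →
      IsLevel m (u + height s + step x) → motive (u + height s + step x) r →
      motive u (s ++ x :: r))
    (u : ℤ) (p : List Bool) : motive u p := by
  induction hn : p.length using Nat.strong_induction_on generalizing u p with
  | _ n ih =>
    rcases exists_first_isLevel m u p with ht | ⟨s, x, r, rfl, hs, hx⟩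
    · exact tail u p ht
    · exact segment u s x r hs hx (ih r.length (by simp at hn; omega) _ _ rfl)

/-- `swapFrom m u seg p` walks `p` from height `u`, `seg` being the part of the current segment
walked so far; each segment is emitted through `flipLoop` when it reaches a level. -/
def swapFrom (m : ℕ) : ℤ → List Bool → List Bool → List Bool
  | _, seg, [] => seg
  | u, seg, x :: r =>
    if IsLevel m (u + step x) then flipLoop (seg ++ [x]) ++ swapFrom m (u + step x) [] r
    else swapFrom m (u + step x) (seg ++ [x]) r

lemma swapFrom_append_of_allHeights {u : ℤ} {s : List Bool} (hs : AllHeights (¬IsLevel m ·) u s)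
    (seg r : List Bool) : swapFrom m u seg (s ++ r) = swapFrom m (u + height s) (seg ++ s) r := by
  induction s generalizing u seg with
  | nil => simp
  | cons y s ih => simp [swapFrom, hs.1, ih hs.2, add_assoc]

lemma swapFrom_of_allHeights {u : ℤ} {t : List Bool} (ht : AllHeights (¬IsLevel m ·) u t) :
    swapFrom m u [] t = t := by
  simpa [swapFrom] using swapFrom_append_of_allHeights ht [] []

lemma swapFrom_segment {u : ℤ} {s : List Bool} {x : Bool} (hs : AllHeights (¬IsLevel m ·) u s)
    (hx : IsLevel m (u + height s + step x)) (r : List Bool) :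
    swapFrom m u [] (s ++ x :: r) =
      flipLoop (s ++ [x]) ++ swapFrom m (u + height s + step x) [] r := by
  simp [swapFrom_append_of_allHeights hs, swapFrom, hx]

lemma swapFrom_swapFrom (m : ℕ) (u : ℤ) (p : List Bool) :
    swapFrom m u [] (swapFrom m u [] p) = p := by
  induction u, p using walk_induction m with
  | tail u t ht => rw [swapFrom_of_allHeights ht, swapFrom_of_allHeights ht]
  | segment u s x r hs hx ih =>
    obtain ⟨s', x', hflip, hs', hx'⟩ := flipLoop_segment hs hx
    rw [swapFrom_segment hs hx, hflip, List.append_assoc, List.singleton_append,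
      swapFrom_segment hs' (hx' ▸ hx), hx', ih, ← hflip, flipLoop_flipLoop]
    simp

lemma length_swapFrom (m : ℕ) (u : ℤ) (p : List Bool) :
    (swapFrom m u [] p).length = p.length := by
  induction u, p using walk_induction m with
  | tail u t ht => rw [swapFrom_of_allHeights ht]
  | segment u s x r hs hx ih => simp [swapFrom_segment hs hx, ih]; omega

lemma height_swapFrom (m : ℕ) (u : ℤ) (p : List Bool) :
    height (swapFrom m u [] p) = height p := by
  induction u, p using walk_induction m with
  | tail u t ht => rw [swapFrom_of_allHeights ht]
  | segment u s x r hs hx ih => simp [swapFrom_segment hs hx, ih]; ring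

lemma allHeights_nonneg_swapFrom (hm : 2 ≤ m) {u : ℤ} {p : List Bool}
    (hp : AllHeights (0 ≤ ·) u p) : AllHeights (0 ≤ ·) u (swapFrom m u [] p) := by
  induction u, p using walk_induction m with
  | tail u t ht => rwa [swapFrom_of_allHeights ht]
  | segment u s x r hs hx ih =>
    rw [← List.singleton_append, ← List.append_assoc, allHeights_append] at hp
    rw [swapFrom_segment hs hx, allHeights_append, height_flipLoop]
    exact ⟨allHeights_nonneg_flipLoop hm hs hx hp.1,
      by simpa [add_assoc] using ih (by simpa [add_assoc] using hp.2)⟩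

theorem upCount_swapFrom (hm : 2 ≤ m) {u : ℤ} {p : List Bool} (hu : IsLevel m u)
    (hp : AllHeights (0 ≤ ·) u p) (hend : u + height p = 0)
    (hstart : 0 ≤ u ∨ 0 < upCount (IsLevel m) u p) :
    upCount (IsLevel m) u (swapFrom m u [] p) = upCount (fun h => (m : ℤ) ∣ h) u p ∧
      upCount (fun h => (m : ℤ) ∣ h) u (swapFrom m u [] p) = upCount (IsLevel m) u p := by
  induction u, p using walk_induction m with
  | tail u t ht =>
    rw [swapFrom_of_allHeights ht, upCount_eq_zero ht]
    suffices upCount (fun h => (m : ℤ) ∣ h) u t = 0 from ⟨this.symm, this⟩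
    obtain _ | ⟨_ | _, w⟩ := t
    · rfl
    · simpa using upCount_dvd_eq_zero ht.1 ht.2
    · -- a final part leaving a level `u ≥ 0` upwards could not come down to `0`
      exfalso
      have hw := ht.2.strip hu le_rfl (by simp; omega)
      have := (hw.final ⟨le_rfl, by simp; omega⟩).1
      simp only [height_cons, step_true] at hend this
      rcases hstart with h | h
      · omega
      · simp [upCount_eq_zero ht] at h
  | segment u s x r hs hx ih =>
    have hL : 0 ≤ u + height s + step x := hp.of_append_cons
    have hsplit : s ++ x :: r = (s ++ [x]) ++ r := by simp
    rw [swapFrom_segment hs hx]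
    rw [hsplit, allHeights_append] at hp
    rw [hsplit] at hend hstart ⊢
    obtain ⟨hA, hB⟩ :=
      ih hx (by simpa [add_assoc] using hp.2) (by simp at hend ⊢; omega) (.inl hL)
    obtain ⟨hA', hB'⟩ := upCount_flipLoop_segment hm hu hs hx
    simp only [upCount_append, height_flipLoop, hA', hB']
    simp only [height_append, height_cons, height_nil, add_zero, ← add_assoc] at hA hB ⊢
    omega

lemma swapFrom_cons_true (hm : 2 ≤ m) {p : List Bool} (hp : AllHeights (0 ≤ ·) 0 p) :
    swapFrom m (-1) [] (true :: p) = true :: swapFrom m 0 [] p := by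
  have h0 : ¬IsLevel m (-1 + step true) := by simpa using not_isLevel_zero hm
  rcases exists_first_isLevel m 0 p with ht | ⟨s, x, r, rfl, hs, hx⟩
  · rw [swapFrom_of_allHeights ht, swapFrom_of_allHeights]
    exact ⟨h0, by simpa using ht⟩
  · have hL : 1 ≤ height s + step x := by
      have hL0 : 0 ≤ height s + step x := by simpa using hp.of_append_cons
      have := IsLevel.le_add_one (by simpa using hx) hL0
      omega
    have hs' : AllHeights (¬IsLevel m ·) (-1) (true :: s) := ⟨h0, by simpa using hs⟩
    have hx' : IsLevel m (-1 + height (true :: s) + step x) := by simpa using hx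
    have hL' : -1 + height (true :: s) + step x = 0 + height s + step x := by simp
    rw [← List.cons_append, swapFrom_segment hs' hx', swapFrom_segment hs hx, hL', flipLoop,
      flipLoop, if_neg (by simp; omega), if_neg (by simp; omega)]
    rfl

lemma isDyckPath_iff {n : ℕ} {p : List Bool} :
    IsDyckPath n p ↔ p.length = 2 * n ∧ height p = 0 ∧ AllHeights (0 ≤ ·) 0 p := by
  have hcount := List.count_true_add_count_false p
  simp only [IsDyckPath, allHeights_nonneg_iff le_rfl, height_eq_count_sub_count, zero_add]
  exact and_congr_right fun hlen => and_congr (by omega) (forall_congr' fun i => by omega)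

lemma upStepsMod_eq_upCount (m c : ℕ) (p : List Bool) :
    upStepsMod m c p = upCount (fun h => h.toNat % m = c) 0 p := by
  rw [upStepsMod, ← card_filter_eq_upCount]
  refine congrArg Finset.card (Finset.filter_congr fun i _ => ?_)
  rw [stepHeight, zero_add, height_eq_count_sub_count]
  congr! 3
  omega

lemma toNat_emod_eq_sub_one_iff (hm : 0 < m) {h : ℤ} (h0 : 0 ≤ h) :
    h.toNat % m = m - 1 ↔ IsLevel m h := by
  have hr : ((h.toNat % m : ℕ) : ℤ) = h % m := by rw [Int.natCast_mod, Int.toNat_of_nonneg h0]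
  have hr₀ := Int.emod_nonneg h (by omega : (m : ℤ) ≠ 0)
  have hr₁ := Int.emod_lt_of_pos h (by omega : (0 : ℤ) < m)
  rw [IsLevel, show h + 1 = (h % m + 1) + m * (h / m) by linarith [Int.emod_add_mul_ediv h m],
    dvd_add_left (dvd_mul_right _ _)]
  constructor
  · intro e
    rw [show h % m + 1 = m by omega]
  · intro hd
    have := Int.le_of_dvd (by omega) hd
    omega

lemma toNat_emod_eq_zero_iff {h : ℤ} (h0 : 0 ≤ h) : h.toNat % m = 0 ↔ (m : ℤ) ∣ h := by
  rw [← Nat.dvd_iff_mod_eq_zero, ← Int.natCast_dvd_natCast, Int.toNat_of_nonneg h0]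

lemma upStepsMod_sub_one_eq_upCount (hm : 0 < m) {p : List Bool} (hp : AllHeights (0 ≤ ·) 0 p) :
    upStepsMod m (m - 1) p = upCount (IsLevel m) 0 p := by
  rw [upStepsMod_eq_upCount]
  exact upCount_congr (hp.imp fun h h0 => toNat_emod_eq_sub_one_iff hm h0)

lemma upStepsMod_zero_eq_upCount {p : List Bool} (hp : AllHeights (0 ≤ ·) 0 p) :
    upStepsMod m 0 p = upCount (fun h => (m : ℤ) ∣ h) 0 p := by
  rw [upStepsMod_eq_upCount]
  exact upCount_congr (hp.imp fun h h0 => toNat_emod_eq_zero_iff h0)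

theorem upStepsMod_swapFrom (hm : 2 ≤ m) {n a b : ℕ} (ha : 1 ≤ a) {p : List Bool}
    (hp : IsDyckPath n p ∧ upStepsMod m (m - 1) p = a ∧ upStepsMod m 0 p = b) :
    IsDyckPath n (swapFrom m 0 [] p) ∧ upStepsMod m (m - 1) (swapFrom m 0 [] p) = b + 1 ∧
      upStepsMod m 0 (swapFrom m 0 [] p) = a - 1 := by
  obtain ⟨hD, rfl, rfl⟩ := hp
  obtain ⟨hlen, hh, hnn⟩ := isDyckPath_iff.1 hD
  have hq := allHeights_nonneg_swapFrom hm hnn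
  rw [upStepsMod_sub_one_eq_upCount (by omega) hnn] at ha ⊢
  rw [upStepsMod_sub_one_eq_upCount (by omega) hq, upStepsMod_zero_eq_upCount hnn,
    upStepsMod_zero_eq_upCount hq]
  have h0 := not_isLevel_zero hm
  -- an up step from the level `-1` turns the initial climb into a segment
  have hlift := upCount_swapFrom hm (u := -1) (p := true :: p) (by simp [IsLevel])
    (by simpa using hnn) (by simpa using hh) (.inr (by simp [h0]; omega))
  rw [swapFrom_cons_true hm hnn] at hlift
  simp only [upCount_cons, step_true, neg_add_cancel, zero_add, h0, dvd_zero, and_false,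
    and_self, if_true, if_false] at hlift
  exact ⟨isDyckPath_iff.2 ⟨by rwa [length_swapFrom], by rwa [height_swapFrom], hq⟩,
    by omega, by omega⟩

end BoolWalk

theorem upSteps_joint_distribution_swap_general (m n j k : ℕ) (hm : 2 ≤ m)
    (hj : 1 ≤ j) :
    Nat.card {p : List Bool // IsDyckPath n p ∧ upStepsMod m (m - 1) p = j ∧
        upStepsMod m 0 p = k} =
      Nat.card {p : List Bool // IsDyckPath n p ∧ upStepsMod m (m - 1) p = k + 1 ∧
        upStepsMod m 0 p = j - 1} :=
  Nat.card_congr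
    { toFun := fun p => ⟨BoolWalk.swapFrom m 0 [] p, BoolWalk.upStepsMod_swapFrom hm hj p.2⟩
      invFun := fun q => ⟨BoolWalk.swapFrom m 0 [] q, by
        simpa [Nat.sub_add_cancel hj] using BoolWalk.upStepsMod_swapFrom hm k.succ_pos q.2⟩
      left_inv := fun p => Subtype.ext (BoolWalk.swapFrom_swapFrom m 0 p)
      right_inv := fun q => Subtype.ext (BoolWalk.swapFrom_swapFrom m 0 q) }

/-- For `m ≥ 2`, `j ≥ 1`, the number of Dyck paths of semilength `n` with exactly `j`
up steps at height `h ≡ m-1 (mod m)` and exactly `k` up steps at height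
`h ≡ 0 (mod m)` equals the number with exactly `k+1` up steps at height
`h ≡ m-1 (mod m)` and exactly `j-1` up steps at height `h ≡ 0 (mod m)`. -/
theorem upSteps_joint_distribution_swap (m n j k : ℕ) (hm : 2 ≤ m) (hn : 1 ≤ n)
    (hj : 1 ≤ j) :
    Nat.card {p : List Bool // IsDyckPath n p ∧ upStepsMod m (m - 1) p = j ∧
        upStepsMod m 0 p = k} =
      Nat.card {p : List Bool // IsDyckPath n p ∧ upStepsMod m (m - 1) p = k + 1 ∧
        upStepsMod m 0 p = j - 1} :=
  upSteps_joint_distribution_swap_general m n j k hm hj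
end

section
/- For n ≥ 1, the number of Dyck paths of semilength n with no up steps at height h ≡ 0 (mod 3) is 2^(n-1). -/
def pathHeight (p : List Bool) (i : ℕ) : ℤ :=
  (p.take i).count true - (p.take i).count false

@[simp]
lemma pathHeight_zero (p : List Bool) : pathHeight p 0 = 0 := by
  simp [pathHeight]

@[simp]
lemma pathHeight_nil (i : ℕ) : pathHeight [] i = 0 := by
  simp [pathHeight]

lemma pathHeight_cons_succ (c : Bool) (p : List Bool) (i : ℕ) :
    pathHeight (c :: p) (i + 1) = (if c then 1 else -1) + pathHeight p i := by
  cases c <;> grind [pathHeight]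

lemma pathHeight_succ {p : List Bool} {i : ℕ} (hi : i < p.length) :
    pathHeight p (i + 1) = pathHeight p i + if p.getD i false then 1 else -1 := by
  rw [pathHeight, pathHeight, List.take_add_one, List.getElem?_eq_getElem hi,
    List.getD_eq_getElem _ _ hi]
  cases p[i] <;> grind

lemma pathHeight_succ_of_length_le {p : List Bool} {i : ℕ} (hi : p.length ≤ i) :
    pathHeight p (i + 1) = pathHeight p i := by
  rw [pathHeight, pathHeight, List.take_of_length_le hi, List.take_of_length_le (by omega)]

lemma natCast_stepHeight (p : List Bool) (i : ℕ) :
    (stepHeight p i : ℤ) = max (pathHeight p (i + 1)) 0 := by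
  rw [stepHeight, pathHeight]
  omega

lemma isDyckPath_iff {n : ℕ} {p : List Bool} :
    IsDyckPath n p ↔
      p.length = 2 * n ∧ (∀ i, 0 ≤ pathHeight p i) ∧ pathHeight p p.length = 0 := by
  have := List.count_true_add_count_false p
  simp only [IsDyckPath, pathHeight, List.take_length, sub_nonneg, Nat.cast_le]
  constructor
  · rintro ⟨hlen, hup, hpos⟩
    exact ⟨hlen, hpos, by omega⟩
  · rintro ⟨hlen, hpos, hend⟩
    exact ⟨hlen, by omega, hpos⟩

lemma upStepsMod_three_zero_eq_zero_iff {p : List Bool} (hpos : ∀ i, 0 ≤ pathHeight p i) :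
    upStepsMod 3 0 p = 0 ↔ ∀ i, pathHeight p i ≤ 2 := by
  rw [upStepsMod_eq_zero_iff]
  constructor
  · intro hup i
    induction i with
    | zero => simp
    | succ i ih =>
      rcases lt_or_ge i p.length with hi | hi
      · have hstep := pathHeight_succ hi
        cases hc : p.getD i false
        · simp only [hc, Bool.false_eq_true, ↓reduceIte] at hstep
          omega
        · have hnot_div := hup i hi hc
          have := natCast_stepHeight p i
          simp only [hc, ↓reduceIte] at hstep
          omega
      · rw [pathHeight_succ_of_length_le hi]
        exact ih
  · intro hle i hi hc
    have hstep := pathHeight_succ hi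
    simp only [hc, ↓reduceIte] at hstep
    have := hle (i + 1)
    have := hpos i
    have := natCast_stepHeight p i
    omega

def startHeight (s : Bool) : ℤ := if s then 2 else 0

def IsStripWalk (h : ℤ) (p : List Bool) : Prop :=
  (∀ i, h + pathHeight p i ∈ Set.Icc 0 2) ∧ h + pathHeight p p.length = 0

lemma isDyckPath_and_upStepsMod_three_zero_iff {n : ℕ} {p : List Bool} :
    IsDyckPath n p ∧ upStepsMod 3 0 p = 0 ↔ p.length = 2 * n ∧ IsStripWalk 0 p := by
  simp only [IsStripWalk, zero_add, Set.mem_Icc, forall_and, isDyckPath_iff]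
  constructor
  · rintro ⟨⟨hlen, hpos, hend⟩, hup⟩
    exact ⟨hlen, ⟨hpos, (upStepsMod_three_zero_eq_zero_iff hpos).1 hup⟩, hend⟩
  · rintro ⟨hlen, ⟨hpos, hle⟩, hend⟩
    exact ⟨⟨hlen, hpos, hend⟩, (upStepsMod_three_zero_eq_zero_iff hpos).2 hle⟩

lemma isStripWalk_not_cons_cons_iff (s d : Bool) (p : List Bool) :
    IsStripWalk (startHeight s) ((!s) :: d :: p) ↔ IsStripWalk (startHeight d) p := by
  have hshift : ∀ i, startHeight s + pathHeight ((!s) :: d :: p) (i + 2)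
      = startHeight d + pathHeight p i := by
    intro i
    rw [pathHeight_cons_succ, pathHeight_cons_succ]
    cases s <;> cases d <;> grind [startHeight]
  have hone : startHeight s + pathHeight ((!s) :: d :: p) 1 = 1 := by
    rw [pathHeight_cons_succ]
    cases s <;> simp [startHeight]
  simp only [IsStripWalk, List.length_cons, hshift]
  constructor
  · rintro ⟨hstrip, hend⟩
    exact ⟨fun i => hshift i ▸ hstrip (i + 2), hend⟩
  · rintro ⟨hstrip, hend⟩
    refine ⟨fun i => ?_, hend⟩
    match i with
    | 0 => cases s <;> simp [startHeight]
    | 1 => simp [hone]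
    | i + 2 => exact hshift i ▸ hstrip i

lemma isStripWalk_nil : IsStripWalk 0 [] := by
  simp [IsStripWalk]

/-- The strip walk from height `startHeight s` whose steps at odd indices are `b` followed by a
final down step. -/
def lowPath : Bool → List Bool → List Bool
  | s, [] => [!s, false]
  | s, x :: b => (!s) :: x :: lowPath x b

lemma lowPath_length (s : Bool) (b : List Bool) : (lowPath s b).length = 2 * b.length + 2 := by
  induction b generalizing s with
  | nil => rfl
  | cons x b ih => grind [lowPath]

lemma lowPath_injective (s : Bool) : Function.Injective (lowPath s) := by
  intro b₁ b₂ h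
  have hlen : b₁.length = b₂.length := by
    simpa [lowPath_length] using congrArg List.length h
  induction b₁ generalizing s b₂ with
  | nil => exact (List.length_eq_zero_iff.1 hlen.symm).symm
  | cons x b₁ ih =>
    obtain _ | ⟨y, b₂⟩ := b₂
    · simp at hlen
    · simp only [lowPath, List.cons.injEq, true_and] at h
      obtain ⟨rfl, h⟩ := h
      rw [ih x h (by simpa using hlen)]

lemma isStripWalk_lowPath (s : Bool) (b : List Bool) :
    IsStripWalk (startHeight s) (lowPath s b) := by
  induction b generalizing s with
  | nil =>
    rw [lowPath, isStripWalk_not_cons_cons_iff]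
    exact isStripWalk_nil
  | cons x b ih =>
    rw [lowPath, isStripWalk_not_cons_cons_iff]
    exact ih x

lemma exists_lowPath_eq : ∀ {s : Bool} {p : List Bool},
    IsStripWalk (startHeight s) p → p ≠ [] → ∃ b, lowPath s b = p
  | _, [], _, hne => absurd rfl hne
  | s, [c], hp, _ => by
    have hend := hp.2
    simp only [List.length_singleton, pathHeight_cons_succ, pathHeight_zero] at hend
    cases s <;> cases c <;> simp [startHeight] at hend
  | s, c :: d :: p, hp, _ => by
    have hc : c = !s := by
      have := hp.1 1
      simp only [pathHeight_cons_succ, pathHeight_zero, Set.mem_Icc] at this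
      cases s <;> cases c <;> simp [startHeight] at this ⊢
    subst hc
    rw [isStripWalk_not_cons_cons_iff] at hp
    rcases eq_or_ne p [] with rfl | hne
    · have hd : d = false := by
        have := hp.2
        cases d <;> simp_all [startHeight]
      exact ⟨[], by simp [lowPath, hd]⟩
    · obtain ⟨b, rfl⟩ := exists_lowPath_eq hp hne
      exact ⟨d :: b, rfl⟩

lemma mem_range_lowPath_iff {m : ℕ} {p : List Bool} :
    p ∈ Set.range (fun v : List.Vector Bool m => lowPath false v.toList) ↔
      p.length = 2 * (m + 1) ∧ IsStripWalk 0 p := by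
  constructor
  · rintro ⟨v, rfl⟩
    exact ⟨by rw [lowPath_length, v.toList_length]; ring, isStripWalk_lowPath false _⟩
  · rintro ⟨hlen, hp⟩
    obtain ⟨b, rfl⟩ := exists_lowPath_eq (s := false) hp (List.ne_nil_of_length_pos (by omega))
    have hb : b.length = m := by rw [lowPath_length] at hlen; omega
    exact ⟨⟨b, hb⟩, rfl⟩

theorem no_upSteps_height_div_three_general (n : ℕ) :
    Nat.card {p : List Bool // IsDyckPath n p ∧ upStepsMod 3 0 p = 0} = 2 ^ (n - 1) := by
  simp only [isDyckPath_and_upStepsMod_three_zero_iff]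
  rcases n with _ | m
  · have hnil : ∀ p : List Bool, p.length = 2 * 0 ∧ IsStripWalk 0 p ↔ p = [] := fun p => by
      rw [mul_zero, List.length_eq_zero_iff]
      exact ⟨And.left, fun hp => ⟨hp, hp ▸ isStripWalk_nil⟩⟩
    rw [Nat.card_congr (Equiv.subtypeEquivRight hnil)]
    simp
  · rw [Nat.card_congr (Equiv.subtypeEquivRight fun p => mem_range_lowPath_iff.symm),
      Nat.card_range_of_injective (f := fun v : List.Vector Bool m => lowPath false v.toList)
        ((lowPath_injective false).comp List.Vector.toList_injective)]
    simp

/-- The number of Dyck paths of semilength `n` with no up steps at height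
`h ≡ 0 (mod 3)` is `2^(n-1)`. -/
theorem no_upSteps_height_div_three (n : ℕ) (hn : 1 ≤ n) :
    Nat.card {p : List Bool // IsDyckPath n p ∧ upStepsMod 3 0 p = 0} = 2 ^ (n - 1) :=
  no_upSteps_height_div_three_general n
end

section
/- Let E(x,y) = Σ_{n,k≥0} e_{n,k} y^k x^n where e_{n,k} is the number of Dyck paths of semilength n with exactly k exterior pairs. Then E satisfies E = 1 + x·(y·E + (1-y)/(1-x))·E as formal power series. -/
/-- The up step at position `i` is matched with the down step at position `j`:
the steps strictly between them form a balanced nonnegative (Dyck) word. -/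
def Matched (p : List Bool) (i j : ℕ) : Prop :=
  i < j ∧ j < p.length ∧ p.getD i false = true ∧ p.getD j true = false ∧
  (((p.drop (i + 1)).take (j - i - 1)).count true =
      ((p.drop (i + 1)).take (j - i - 1)).count false) ∧
  ∀ k < j - i - 1,
    ((((p.drop (i + 1)).take (j - i - 1)).take k).count false ≤
      (((p.drop (i + 1)).take (j - i - 1)).take k).count true)

/-- The section of `p` from position `a` to position `b` (inclusive) is a pyramid
`U^h D^h`. -/
def IsPyramidSec (p : List Bool) (a b : ℕ) : Prop :=
  a ≤ b ∧ b < p.length ∧ b - a + 1 = 2 * ((b - a + 1) / 2) ∧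
  (p.drop a).take (b - a + 1) =
    List.replicate ((b - a + 1) / 2) true ++ List.replicate ((b - a + 1) / 2) false

/-- A matched pair `(i, j)` is exterior if it does not belong to any pyramid,
equivalently the section of the path from `i` to `j` is not of the form `U^t D^t`. -/
def ExteriorPair (p : List Bool) (i j : ℕ) : Prop :=
  Matched p i j ∧ ¬ IsPyramidSec p i j

open scoped Classical in
/-- The number of exterior pairs of `p`. -/
noncomputable def exteriorPairs (p : List Bool) : ℕ :=
  ((Finset.range p.length ×ˢ Finset.range p.length).filter
    (fun q : ℕ × ℕ => ExteriorPair p q.1 q.2)).card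

open MvPowerSeries in
/-- `E(x,y) = Σ e_{n,k} y^k x^n` where `e_{n,k}` is the number of Dyck paths of
semilength `n` with exactly `k` exterior pairs; `X 0` is `x` and `X 1` is `y`. -/
noncomputable def E : MvPowerSeries (Fin 2) ℚ :=
  fun d => (Nat.card {p : List Bool // IsDyckPath (d 0) p ∧ exteriorPairs p = d 1} : ℚ)

namespace MvPowerSeries

variable {σ α β R : Type*} [CommSemiring R]

/-- Counts correctly only when the fibres of `w` are finite: `Nat.card` of an infinite type
is `0`. -/
noncomputable def countingSeries (w : α → σ →₀ ℕ) : MvPowerSeries σ R :=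
  fun d => Nat.card {a // w a = d}

lemma coeff_countingSeries (w : α → σ →₀ ℕ) (d : σ →₀ ℕ) :
    coeff d (countingSeries w : MvPowerSeries σ R) = Nat.card {a // w a = d} := rfl

lemma countingSeries_comp_equiv (e : α ≃ β) (w : β → σ →₀ ℕ) :
    (countingSeries (w ∘ e) : MvPowerSeries σ R) = countingSeries w := by
  ext d
  simp only [coeff_countingSeries]
  exact congrArg _ (Nat.card_congr (e.subtypeEquiv fun _ => Iff.rfl))

lemma countingSeries_const (d₀ : σ →₀ ℕ) :
    (countingSeries (fun _ : Unit => d₀) : MvPowerSeries σ R) = monomial d₀ 1 := by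
  classical
  ext d
  rw [coeff_countingSeries, coeff_monomial]
  by_cases h : d = d₀
  · subst h
    simp
  · have : IsEmpty {u : Unit // d₀ = d} := ⟨fun u => h u.2.symm⟩
    rw [if_neg h, Nat.card_of_isEmpty, Nat.cast_zero]

lemma countingSeries_const_add (d₀ : σ →₀ ℕ) (w : α → σ →₀ ℕ) :
    (countingSeries (fun a => d₀ + w a) : MvPowerSeries σ R) =
      monomial d₀ 1 * countingSeries w := by
  ext d
  rw [coeff_monomial_mul, coeff_countingSeries, coeff_countingSeries, one_mul]
  split_ifs with h
  · exact congrArg _ (Nat.card_congr (Equiv.subtypeEquivRight fun a => by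
      rw [eq_tsub_iff_add_eq_of_le h, add_comm]))
  · have : IsEmpty {a // d₀ + w a = d} := ⟨fun a => h (a.2 ▸ le_self_add)⟩
    rw [Nat.card_of_isEmpty, Nat.cast_zero]

lemma countingSeries_sumElim (w₁ : α → σ →₀ ℕ) (w₂ : β → σ →₀ ℕ)
    (h₁ : ∀ d, Finite {a // w₁ a = d}) (h₂ : ∀ d, Finite {b // w₂ b = d}) :
    (countingSeries (Sum.elim w₁ w₂) : MvPowerSeries σ R) =
      countingSeries w₁ + countingSeries w₂ := by
  ext d
  simp only [map_add, coeff_countingSeries, ← Nat.cast_add, ← Nat.card_sum]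
  exact congrArg _ (Nat.card_congr Equiv.subtypeSum)

def fiberProdEquiv [DecidableEq σ] (w₁ : α → σ →₀ ℕ) (w₂ : β → σ →₀ ℕ)
    (d : σ →₀ ℕ) :
    {x : α × β // w₁ x.1 + w₂ x.2 = d} ≃
      Σ e : Finset.HasAntidiagonal.antidiagonal d,
        {a // w₁ a = e.1.1} × {b // w₂ b = e.1.2} where
  toFun x := ⟨⟨(w₁ x.1.1, w₂ x.1.2), Finset.HasAntidiagonal.mem_antidiagonal.mpr x.2⟩,
    ⟨x.1.1, rfl⟩, ⟨x.1.2, rfl⟩⟩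
  invFun s := ⟨(s.2.1, s.2.2), by
    rw [s.2.1.2, s.2.2.2]
    exact Finset.HasAntidiagonal.mem_antidiagonal.mp s.1.2⟩
  left_inv _ := rfl
  right_inv := by
    rintro ⟨⟨⟨d₁, d₂⟩, _⟩, ⟨a, ha⟩, ⟨b, hb⟩⟩
    dsimp only at ha hb
    subst ha hb
    rfl

lemma countingSeries_prod (w₁ : α → σ →₀ ℕ) (w₂ : β → σ →₀ ℕ)
    (h₁ : ∀ d, Finite {a // w₁ a = d}) (h₂ : ∀ d, Finite {b // w₂ b = d}) :
    (countingSeries (fun x : α × β => w₁ x.1 + w₂ x.2) : MvPowerSeries σ R) =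
      countingSeries w₁ * countingSeries w₂ := by
  classical
  ext d
  rw [coeff_mul, coeff_countingSeries, Nat.card_congr (fiberProdEquiv w₁ w₂ d), Nat.card_sigma,
    ← Finset.sum_coe_sort (Finset.HasAntidiagonal.antidiagonal d)]
  push_cast [Nat.card_prod, coeff_countingSeries]
  rfl

section FiniteFibers

variable {w : α → σ →₀ ℕ} (h : ∀ d, Finite {a // w a = d})
include h

lemma finite_fiber_comp {f : β → α} (hf : Function.Injective f) (d : σ →₀ ℕ) :
    Finite {b // w (f b) = d} :=
  Finite.of_injective (fun b => (⟨f b.1, b.2⟩ : {a // w a = d}))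
    fun _ _ e => Subtype.ext (hf (congrArg Subtype.val e))

lemma finite_fiber_const_add (d₀ d : σ →₀ ℕ) : Finite {a // d₀ + w a = d} :=
  Finite.of_injective
    (fun a => (⟨a.1, eq_tsub_of_add_eq ((add_comm _ _).trans a.2)⟩ : {a // w a = d - d₀}))
    fun _ _ e => Subtype.ext (congrArg (fun a : {a // w a = d - d₀} => a.1) e)

lemma finite_fiber_sumElim {w₂ : β → σ →₀ ℕ} (h₂ : ∀ d, Finite {b // w₂ b = d})
    (d : σ →₀ ℕ) :
    Finite {x // Sum.elim w w₂ x = d} :=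
  have : Finite {a // Sum.elim w w₂ (.inl a) = d} := h d
  have : Finite {b // Sum.elim w w₂ (.inr b) = d} := h₂ d
  Finite.of_equiv _ Equiv.subtypeSum.symm

lemma finite_fiber_prod {w₂ : β → σ →₀ ℕ} (h₂ : ∀ d, Finite {b // w₂ b = d})
    (d : σ →₀ ℕ) :
    Finite {x : α × β // w x.1 + w₂ x.2 = d} := by
  classical
  exact Finite.of_equiv _ (fiberProdEquiv w w₂ d).symm

end FiniteFibers

lemma finite_fiber_single {σ : Type*} (i : σ) (d : σ →₀ ℕ) :
    Finite {n : ℕ // Finsupp.single i n = d} :=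
  Finite.of_injective (β := Unit) (fun _ => ())
    fun m n _ => Subtype.ext (Finsupp.single_injective i (m.2.trans n.2.symm))

lemma countingSeries_single_mul_one_sub_X {σ R : Type*} [CommRing R] (i : σ) :
    (countingSeries (fun n : ℕ => Finsupp.single i n) : MvPowerSeries σ R) * (1 - X i) = 1 := by
  have hweight : (fun n : ℕ => Finsupp.single i n) ∘ Equiv.natSumPUnitEquivNat =
      Sum.elim (fun n => Finsupp.single i 1 + Finsupp.single i n) (fun _ : Unit => 0) := by
    funext x
    rcases x with n | ⟨⟩
    · change Finsupp.single i (n + 1) = _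
      rw [add_comm, Finsupp.single_add]
      rfl
    · exact Finsupp.single_zero i
  have hrec := countingSeries_comp_equiv (R := R) Equiv.natSumPUnitEquivNat
    (fun n : ℕ => Finsupp.single i n)
  rw [hweight, countingSeries_sumElim _ _ (finite_fiber_const_add (finite_fiber_single i) _)
    fun _ => inferInstance, countingSeries_const_add, countingSeries_const, monomial_zero_one,
    ← X_def] at hrec
  linear_combination -hrec

end MvPowerSeries

lemma List.take_succ_eq_append_getD {α : Type*} {l : List α} {i : ℕ} (hi : i < l.length)
    (d : α) :
    l.take (i + 1) = l.take i ++ [l.getD i d] := by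
  rw [List.take_add_one, List.getElem?_eq_getElem hi, List.getD_eq_getElem _ _ hi]
  rfl

section ExteriorPairs

variable {X Y A : List Bool} {n i j : ℕ}

lemma IsDyckPath.count_false_eq (h : IsDyckPath n X) : X.count false = n := by
  have := List.count_true_add_count_false X
  obtain ⟨h₁, h₂, -⟩ := h
  omega

lemma matched_append_left_iff (hj : j < X.length) : Matched (X ++ Y) i j ↔ Matched X i j := by
  unfold Matched
  refine and_congr_right fun hij => ?_
  rw [show j - i - 1 = j - (i + 1) by omega, ← List.drop_take, ← List.drop_take,
    List.take_append_of_le_length hj.le, List.getD_append _ _ _ _ (hij.trans hj),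
    List.getD_append _ _ _ _ hj, List.length_append]
  exact and_congr (iff_of_true (by omega) hj) Iff.rfl

lemma matched_append_right_iff :
    Matched (X ++ Y) (X.length + i) (X.length + j) ↔ Matched Y i j := by
  unfold Matched
  rw [List.getD_append_right _ _ _ _ (by omega), List.getD_append_right _ _ _ _ (by omega),
    Nat.add_sub_cancel_left, Nat.add_sub_cancel_left, Nat.add_assoc,
    List.drop_length_add_append, show X.length + j - (X.length + i) - 1 = j - i - 1 by omega,
    List.length_append, Nat.add_lt_add_iff_left, Nat.add_lt_add_iff_left]

lemma isPyramidSec_append_left_iff (hj : j < X.length) :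
    IsPyramidSec (X ++ Y) i j ↔ IsPyramidSec X i j := by
  unfold IsPyramidSec
  refine and_congr_right fun hij => ?_
  rw [show j - i + 1 = j + 1 - i by omega, ← List.drop_take, ← List.drop_take,
    List.take_append_of_le_length hj, List.length_append]
  exact and_congr (iff_of_true (by omega) hj) Iff.rfl

lemma isPyramidSec_append_right_iff :
    IsPyramidSec (X ++ Y) (X.length + i) (X.length + j) ↔ IsPyramidSec Y i j := by
  unfold IsPyramidSec
  rw [List.drop_length_add_append, Nat.add_sub_add_left, List.length_append,
    Nat.add_le_add_iff_left, Nat.add_lt_add_iff_left]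

lemma exteriorPair_append_left_iff (hj : j < X.length) :
    ExteriorPair (X ++ Y) i j ↔ ExteriorPair X i j :=
  and_congr (matched_append_left_iff hj) (isPyramidSec_append_left_iff hj).not

lemma exteriorPair_append_right_iff :
    ExteriorPair (X ++ Y) (X.length + i) (X.length + j) ↔ ExteriorPair Y i j :=
  and_congr matched_append_right_iff isPyramidSec_append_right_iff.not

/-- A matched pair cannot leave a Dyck prefix: after an up step inside `X`, the rest of `X`
ends strictly below its starting height, which the segment of the pair may not do. -/
lemma Matched.lt_length_of_append (hX : IsDyckPath n X) (h : Matched (X ++ Y) i j)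
    (hi : i < X.length) : j < X.length := by
  by_contra! hj
  obtain ⟨hij, -, hup, -, hbal, hnn⟩ := h
  have hprefix : (((X ++ Y).drop (i + 1)).take (j - i - 1)).take (X.length - (i + 1)) =
      X.drop (i + 1) := by
    rw [List.take_take, min_eq_left (by omega), List.drop_append_of_le_length (by omega),
      List.take_append_of_le_length (by simp), List.take_of_length_le (by simp)]
  have hrest : (X.drop (i + 1)).count false ≤ (X.drop (i + 1)).count true := by
    rcases (show X.length - (i + 1) < j - i - 1 ∨ X.length - (i + 1) = j - i - 1 by omega)
      with hlt | heq
    · rw [← hprefix]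
      exact hnn _ hlt
    · rw [← hprefix, heq, List.take_of_length_le (by simp)]
      exact hbal.ge
  have hstart : (X.take (i + 1)).count false < (X.take (i + 1)).count true := by
    rw [List.getD_append _ _ _ _ hi] at hup
    rw [List.take_succ_eq_append_getD hi false, hup, List.count_append, List.count_append]
    change _ + 0 < _ + 1
    have := hX.2.2 i
    omega
  have htrue := List.count_append (l₁ := X.take (i + 1)) (l₂ := X.drop (i + 1)) (a := true)
  have hfalse := List.count_append (l₁ := X.take (i + 1)) (l₂ := X.drop (i + 1)) (a := false)
  rw [List.take_append_drop, hX.2.1] at htrue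
  rw [List.take_append_drop, hX.count_false_eq] at hfalse
  omega

lemma finite_setOf_exteriorPair (p : List Bool) :
    {q : ℕ × ℕ | ExteriorPair p q.1 q.2}.Finite :=
  ((Set.finite_Iio p.length).prod (Set.finite_Iio p.length)).subset
    fun _ h => ⟨h.1.1.trans h.1.2.1, h.1.2.1⟩

lemma exteriorPairs_eq_ncard (p : List Bool) :
    exteriorPairs p = {q : ℕ × ℕ | ExteriorPair p q.1 q.2}.ncard := by
  rw [exteriorPairs, ← Set.ncard_coe_finset]
  congr 1
  ext ⟨i, j⟩
  simp only [Finset.coe_filter, Finset.mem_product, Finset.mem_range, Set.mem_ofPred_eq]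
  exact ⟨fun h => h.2, fun h => ⟨⟨h.1.1.trans h.1.2.1, h.1.2.1⟩, h⟩⟩

lemma exteriorPairs_eq_zero_of_length_le_one {p : List Bool} (hp : p.length ≤ 1) :
    exteriorPairs p = 0 := by
  rw [exteriorPairs_eq_ncard, Set.ncard_eq_zero (finite_setOf_exteriorPair p)]
  ext ⟨i, j⟩
  simp only [Set.mem_ofPred_eq, Set.mem_empty_iff_false, iff_false]
  intro h
  have := h.1.1
  have := h.1.2.1
  omega

lemma exteriorPairs_append (X Y : List Bool) :
    exteriorPairs (X ++ Y) =
      {q : ℕ × ℕ | ExteriorPair (X ++ Y) q.1 q.2 ∧ q.1 < X.length}.ncard +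
        exteriorPairs Y := by
  set shift : ℕ × ℕ → ℕ × ℕ := fun q => (X.length + q.1, X.length + q.2)
  have hsplit : {q : ℕ × ℕ | ExteriorPair (X ++ Y) q.1 q.2} =
      {q | ExteriorPair (X ++ Y) q.1 q.2 ∧ q.1 < X.length} ∪
        shift '' {q | ExteriorPair Y q.1 q.2} := by
    ext ⟨i, j⟩
    simp only [Set.mem_ofPred_eq, Set.mem_union, Set.mem_image, Prod.exists, shift,
      Prod.mk.injEq]
    constructor
    · intro h
      by_cases hi : i < X.length
      · exact Or.inl ⟨h, hi⟩
      · have := h.1.1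
        refine Or.inr ⟨i - X.length, j - X.length, ?_, by omega, by omega⟩
        rw [← exteriorPair_append_right_iff]
        convert h using 2 <;> omega
    · rintro (⟨h, -⟩ | ⟨a, b, h, rfl, rfl⟩)
      · exact h
      · exact exteriorPair_append_right_iff.mpr h
  have hshift : Function.Injective shift := fun q r h => by
    simp only [shift, Prod.mk.injEq] at h
    exact Prod.ext (by omega) (by omega)
  have hdisj : Disjoint {q : ℕ × ℕ | ExteriorPair (X ++ Y) q.1 q.2 ∧ q.1 < X.length}
      (shift '' {q | ExteriorPair Y q.1 q.2}) := by
    rw [Set.disjoint_left]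
    rintro ⟨i, j⟩ ⟨-, hi⟩ ⟨q, -, hq⟩
    simp only [shift, Prod.mk.injEq] at hq
    omega
  rw [exteriorPairs_eq_ncard, hsplit,
    Set.ncard_union_eq hdisj ((finite_setOf_exteriorPair _).subset fun _ h => h.1)
      ((finite_setOf_exteriorPair Y).image shift),
    Set.ncard_image_of_injective _ hshift, exteriorPairs_eq_ncard]

lemma exteriorPairs_append_of_isDyckPath (hX : IsDyckPath n X) (Y : List Bool) :
    exteriorPairs (X ++ Y) = exteriorPairs X + exteriorPairs Y := by
  rw [exteriorPairs_append, exteriorPairs_eq_ncard X]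
  congr 2
  ext ⟨i, j⟩
  simp only [Set.mem_ofPred_eq]
  constructor
  · rintro ⟨h, hi⟩
    exact (exteriorPair_append_left_iff (h.1.lt_length_of_append hX hi)).mp h
  · intro h
    exact ⟨(exteriorPair_append_left_iff h.1.2.1).mpr h, h.1.1.trans h.1.2.1⟩

lemma matched_nest (hA : IsDyckPath n A) :
    Matched (true :: (A ++ [false])) 0 (A.length + 1) := by
  have hseg : ((true :: (A ++ [false])).drop (0 + 1)).take (A.length + 1 - 0 - 1) = A := by
    simp
  refine ⟨by omega, by simp, rfl, ?_, ?_, ?_⟩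
  · rw [List.getD_cons_succ, List.getD_append_right _ _ _ _ le_rfl, Nat.sub_self]
    rfl
  · rw [hseg, hA.2.1, hA.count_false_eq]
  · intro k _
    rw [hseg]
    exact hA.2.2 k

lemma Matched.right_eq_of_nest (hA : IsDyckPath n A) (h : Matched (true :: (A ++ [false])) 0 j) :
    j = A.length + 1 := by
  obtain ⟨hj, hjlen, -, hdown, hbal, -⟩ := h
  obtain ⟨k, rfl⟩ : ∃ k, j = k + 1 := ⟨j - 1, by omega⟩
  simp only [List.length_cons, List.length_append, List.length_nil] at hjlen
  by_contra hne
  have hk : k < A.length := by omega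
  rw [List.getD_cons_succ, List.getD_append _ _ _ _ hk] at hdown
  rw [show k + 1 - 0 - 1 = k by omega, List.drop_one, List.tail_cons,
    List.take_append_of_le_length hk.le] at hbal
  have := hA.2.2 (k + 1)
  rw [List.take_succ_eq_append_getD hk true, hdown, List.count_append, List.count_append] at this
  change _ + 1 ≤ _ + 0 at this
  omega

lemma isPyramidSec_nest_iff :
    IsPyramidSec (true :: (A ++ [false])) 0 (A.length + 1) ↔
      ∃ m, A = List.replicate m true ++ List.replicate m false := by
  have hwin : ((true :: (A ++ [false])).drop 0).take (A.length + 1 - 0 + 1) =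
      true :: (A ++ [false]) := by
    simp
  simp only [IsPyramidSec, hwin, List.length_cons, List.length_append, List.length_nil]
  constructor
  · rintro ⟨-, -, heven, hpyr⟩
    refine ⟨A.length / 2, ?_⟩
    rw [show (A.length + 1 - 0 + 1) / 2 = A.length / 2 + 1 by omega, List.replicate_succ,
      List.replicate_succ', List.cons_append, List.cons_inj_right, ← List.append_assoc] at hpyr
    exact List.append_cancel_right hpyr
  · rintro ⟨m, rfl⟩
    simp only [List.length_append, List.length_replicate]
    refine ⟨by omega, by omega, by omega, ?_⟩
    rw [show (m + m + 1 - 0 + 1) / 2 = m + 1 by omega, List.replicate_succ, List.replicate_succ']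
    simp

open scoped Classical in
lemma exteriorPairs_nest (hA : IsDyckPath n A) :
    exteriorPairs (true :: (A ++ [false])) = exteriorPairs A +
      if ∃ m, A = List.replicate m true ++ List.replicate m false then 0 else 1 := by
  have houter : {q : ℕ × ℕ | ExteriorPair ([true] ++ (A ++ [false])) q.1 q.2 ∧ q.1 < 1} =
      {q | q = (0, A.length + 1) ∧
        ¬ ∃ m, A = List.replicate m true ++ List.replicate m false} := by
    ext ⟨i, j⟩
    simp only [Set.mem_ofPred_eq, Prod.mk.injEq, List.singleton_append, ExteriorPair,
      ← isPyramidSec_nest_iff]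
    constructor
    · rintro ⟨⟨hm, hpyr⟩, hi⟩
      obtain rfl : i = 0 := by omega
      obtain rfl := hm.right_eq_of_nest hA
      exact ⟨⟨rfl, rfl⟩, hpyr⟩
    · rintro ⟨⟨rfl, rfl⟩, hpyr⟩
      exact ⟨⟨matched_nest hA, hpyr⟩, Nat.one_pos⟩
  rw [← List.singleton_append, exteriorPairs_append, List.length_singleton, houter,
    exteriorPairs_append_of_isDyckPath hA,
    exteriorPairs_eq_zero_of_length_le_one (p := [false]) le_rfl]
  split_ifs with hpyr <;> simp [hpyr, add_comm]

end ExteriorPairs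

namespace DyckWord

open DyckStep

def toBoolList (p : DyckWord) : List Bool := p.toList.map (· == U)

lemma beq_U_injective : Function.Injective (· == U) := by
  intro s t h
  cases s <;> cases t <;> first | rfl | exact absurd h (by decide)

lemma count_true_map_beq_U (l : List DyckStep) : (l.map (· == U)).count true = l.count U :=
  List.count_map_of_injective l _ beq_U_injective U

lemma count_false_map_beq_U (l : List DyckStep) : (l.map (· == U)).count false = l.count D :=
  List.count_map_of_injective l _ beq_U_injective D

lemma isDyckPath_toBoolList (p : DyckWord) : IsDyckPath p.semilength p.toBoolList := by
  refine ⟨by simp [toBoolList], count_true_map_beq_U _, fun i => ?_⟩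
  rw [toBoolList, ← List.map_take, count_true_map_beq_U, count_false_map_beq_U]
  exact p.count_D_le_count_U i

lemma toBoolList_injective : Function.Injective toBoolList :=
  fun _ _ h => DyckWord.ext (List.map_injective_iff.mpr beq_U_injective h)

lemma exists_toBoolList_eq {n : ℕ} {l : List Bool} (h : IsDyckPath n l) :
    ∃ p : DyckWord, p.toBoolList = l := by
  have hinj : Function.Injective fun b : Bool => cond b U D := by
    intro a b
    cases a <;> cases b <;> simp
  have hU (m : List Bool) : (m.map fun b => cond b U D).count U = m.count true :=
    List.count_map_of_injective m _ hinj true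
  have hD (m : List Bool) : (m.map fun b => cond b U D).count D = m.count false :=
    List.count_map_of_injective m _ hinj false
  refine ⟨⟨l.map fun b => cond b U D, ?_, fun i => ?_⟩, ?_⟩
  · rw [hU, hD, h.2.1, h.count_false_eq]
  · rw [← List.map_take, hU, hD]
    exact h.2.2 i
  · rw [toBoolList, List.map_map]
    conv_rhs => rw [← List.map_id l]
    exact List.map_congr_left fun b _ => by cases b <;> rfl

lemma toBoolList_zero : toBoolList 0 = [] := rfl

@[simp] lemma toBoolList_add (p q : DyckWord) :
    (p + q).toBoolList = p.toBoolList ++ q.toBoolList :=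
  List.map_append

@[simp] lemma toBoolList_nest (p : DyckWord) :
    p.nest.toBoolList = true :: (p.toBoolList ++ [false]) := by
  simp [toBoolList, nest]

def pyramid (n : ℕ) : DyckWord := nest^[n] 0

lemma pyramid_succ (n : ℕ) : pyramid (n + 1) = (pyramid n).nest :=
  Function.iterate_succ_apply' _ _ _

lemma semilength_pyramid (n : ℕ) : (pyramid n).semilength = n := by
  induction n with
  | zero => rfl
  | succ n ih => rw [pyramid_succ, semilength_nest, ih]

lemma pyramid_injective : Function.Injective pyramid :=
  fun m n h => by simpa only [semilength_pyramid] using congrArg semilength h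

lemma toBoolList_pyramid (n : ℕ) :
    (pyramid n).toBoolList = List.replicate n true ++ List.replicate n false := by
  induction n with
  | zero => rfl
  | succ n ih =>
    rw [pyramid_succ, toBoolList_nest, ih, List.replicate_succ, List.replicate_succ' (a := false)]
    simp

lemma mem_range_pyramid_iff {p : DyckWord} :
    p ∈ Set.range pyramid ↔
      ∃ m, p.toBoolList = List.replicate m true ++ List.replicate m false :=
  exists_congr fun m => by rw [← toBoolList_pyramid, toBoolList_injective.eq_iff, eq_comm]

lemma exteriorPairs_toBoolList_add (p q : DyckWord) :
    exteriorPairs (p + q).toBoolList = exteriorPairs p.toBoolList + exteriorPairs q.toBoolList := by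
  rw [toBoolList_add, exteriorPairs_append_of_isDyckPath p.isDyckPath_toBoolList]

open scoped Classical in
lemma exteriorPairs_toBoolList_nest (p : DyckWord) :
    exteriorPairs p.nest.toBoolList =
      exteriorPairs p.toBoolList + if p ∈ Set.range pyramid then 0 else 1 := by
  rw [toBoolList_nest, exteriorPairs_nest p.isDyckPath_toBoolList]
  by_cases h : p ∈ Set.range pyramid
  · rw [if_pos h, if_pos (mem_range_pyramid_iff.mp h)]
  · rw [if_neg h, if_neg (mt mem_range_pyramid_iff.mpr h)]

lemma exteriorPairs_toBoolList_pyramid (n : ℕ) :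
    exteriorPairs (pyramid n).toBoolList = 0 := by
  induction n with
  | zero => exact exteriorPairs_eq_zero_of_length_le_one (Nat.zero_le 1)
  | succ n ih => rw [pyramid_succ, exteriorPairs_toBoolList_nest, if_pos ⟨n, rfl⟩, ih]

open MvPowerSeries Finsupp

noncomputable def weight (p : DyckWord) : Fin 2 →₀ ℕ :=
  single 0 p.semilength + single 1 (exteriorPairs p.toBoolList)

lemma weight_eq_iff {p : DyckWord} {d : Fin 2 →₀ ℕ} :
    p.weight = d ↔ p.semilength = d 0 ∧ exteriorPairs p.toBoolList = d 1 := by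
  constructor
  · rintro rfl
    simp [weight]
  · rintro ⟨h₀, h₁⟩
    ext i
    fin_cases i <;> simp [weight, h₀, h₁]

lemma finite_fiber_weight (d : Fin 2 →₀ ℕ) : Finite {p : DyckWord // p.weight = d} :=
  Finite.of_injective
    (fun p => (⟨p.1, (weight_eq_iff.mp p.2).1⟩ : {p : DyckWord // p.semilength = d 0}))
    fun _ _ e => Subtype.ext (congrArg (fun p : {p : DyckWord // p.semilength = d 0} => p.1) e)

lemma weight_zero : weight 0 = 0 := by
  rw [weight, semilength_zero, toBoolList_zero,
    exteriorPairs_eq_zero_of_length_le_one (p := []) (Nat.zero_le 1), single_zero, single_zero,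
    add_zero]

lemma weight_pyramid (n : ℕ) : (pyramid n).weight = single 0 n := by
  rw [weight, semilength_pyramid, exteriorPairs_toBoolList_pyramid, single_zero, add_zero]

open scoped Classical in
lemma weight_nest_add (p q : DyckWord) :
    (p.nest + q).weight =
      single 0 1 + (p.weight + if p ∈ Set.range pyramid then 0 else single 1 1) + q.weight := by
  simp only [weight, exteriorPairs_toBoolList_add, exteriorPairs_toBoolList_nest, semilength_add,
    semilength_nest]
  split_ifs <;> simp only [single_add, add_zero] <;> abel

/-- The first-return decomposition `p = U A D B` of a nonempty Dyck word. -/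
def firstReturnEquiv : Unit ⊕ (DyckWord × DyckWord) ≃ DyckWord where
  toFun := Sum.elim (fun _ => 0) fun x => x.1.nest + x.2
  invFun p := if p = 0 then .inl () else .inr (p.insidePart, p.outsidePart)
  left_inv := by
    rintro (⟨⟩ | ⟨p, q⟩)
    · simp
    · simp [insidePart_add, outsidePart_add]
  right_inv p := by
    by_cases h : p = 0
    · simp [h]
    · simp [h, nest_insidePart_add_outsidePart h]

abbrev NonPyramid : Type := {p : DyckWord // p ∉ Set.range pyramid}

open scoped Classical in
noncomputable def pyramidSumEquiv : ℕ ⊕ NonPyramid ≃ DyckWord :=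
  (Equiv.sumCongr (Equiv.ofInjective pyramid pyramid_injective) (Equiv.refl _)).trans
    (Equiv.sumCompl (· ∈ Set.range pyramid))

lemma countingSeries_weight_split_pyramids :
    (countingSeries weight : MvPowerSeries (Fin 2) ℚ) =
      countingSeries (fun n : ℕ => single 0 n) +
        countingSeries (fun p : NonPyramid => p.1.weight) := by
  have hweight : weight ∘ pyramidSumEquiv =
      Sum.elim (fun n => single 0 n) (fun p : NonPyramid => p.1.weight) := by
    funext x
    rcases x with n | p
    · exact weight_pyramid n
    · rfl
  rw [← countingSeries_comp_equiv pyramidSumEquiv, hweight,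
    countingSeries_sumElim _ _ (finite_fiber_single 0)
      (finite_fiber_comp finite_fiber_weight Subtype.val_injective)]

lemma countingSeries_weight_firstReturn :
    (countingSeries weight : MvPowerSeries (Fin 2) ℚ) =
      1 + X 0 * (countingSeries (fun n : ℕ => single 0 n) + X 1 *
        countingSeries (fun p : NonPyramid => p.1.weight)) *
          countingSeries weight := by
  -- the weight that `A` contributes to `U A D B`, the outer pair included
  set insideWeight := Sum.elim (fun n : ℕ => single 0 n)
    fun p : NonPyramid => single 1 1 + p.1.weight
  have hinside : ∀ d, Finite {x // single 0 1 + insideWeight x = d} :=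
    finite_fiber_const_add (finite_fiber_sumElim (finite_fiber_single 0)
      (finite_fiber_const_add (finite_fiber_comp finite_fiber_weight Subtype.val_injective) _)) _
  let e := (Equiv.sumCongr (Equiv.refl Unit) (Equiv.prodCongr pyramidSumEquiv (Equiv.refl _))).trans
    firstReturnEquiv
  have hweight : weight ∘ e =
      Sum.elim (fun _ => 0) fun x => (single 0 1 + insideWeight x.1) + x.2.weight := by
    funext x
    rcases x with ⟨⟩ | ⟨n | p, q⟩
    · exact weight_zero
    · change ((pyramid n).nest + q).weight = _
      rw [weight_nest_add, if_pos ⟨n, rfl⟩, weight_pyramid, add_zero]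
      rfl
    · change (p.1.nest + q).weight = _
      rw [weight_nest_add, if_neg p.2, add_comm p.1.weight]
      rfl
  calc (countingSeries weight : MvPowerSeries (Fin 2) ℚ)
      = countingSeries (weight ∘ e) := (countingSeries_comp_equiv e weight).symm
    _ = _ := by
      rw [hweight,
        countingSeries_sumElim _ _ (fun _ => inferInstance)
          (finite_fiber_prod hinside finite_fiber_weight),
        countingSeries_const, monomial_zero_one,
        countingSeries_prod _ _ hinside finite_fiber_weight, countingSeries_const_add,
        countingSeries_sumElim _ _ (finite_fiber_single 0)
          (finite_fiber_const_add (finite_fiber_comp finite_fiber_weight Subtype.val_injective) _),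
        countingSeries_const_add, ← X_def, ← X_def]

end DyckWord

open MvPowerSeries in
lemma E_eq_countingSeries : E = countingSeries DyckWord.weight := by
  ext d
  change (Nat.card {l : List Bool // IsDyckPath (d 0) l ∧ exteriorPairs l = d 1} : ℚ) = _
  rw [coeff_countingSeries]
  let toPath (p : {p : DyckWord // p.weight = d}) :
      {l : List Bool // IsDyckPath (d 0) l ∧ exteriorPairs l = d 1} :=
    ⟨p.1.toBoolList, by
      obtain ⟨hn, hk⟩ := DyckWord.weight_eq_iff.mp p.2
      exact ⟨hn ▸ p.1.isDyckPath_toBoolList, hk⟩⟩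
  have hbij : Function.Bijective toPath := by
    refine ⟨fun p q h =>
      Subtype.ext (DyckWord.toBoolList_injective (congrArg Subtype.val h)), ?_⟩
    rintro ⟨l, hl, hk⟩
    obtain ⟨p, rfl⟩ := DyckWord.exists_toBoolList_eq hl
    have hn : p.semilength = d 0 := p.isDyckPath_toBoolList.2.1.symm.trans hl.2.1
    exact ⟨⟨p, DyckWord.weight_eq_iff.mpr ⟨hn, hk⟩⟩, rfl⟩
  exact congrArg _ (Nat.card_congr (Equiv.ofBijective toPath hbij).symm)

open MvPowerSeries in
/-- `E = 1 + x·(y·E + (1-y)/(1-x))·E`. -/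
theorem E_equation :
    E = 1 + (X 0 : MvPowerSeries (Fin 2) ℚ) *
      ((X 1) * E + (1 - X 1) * (1 - X 0)⁻¹) * E := by
  have hinv : (1 - X 0 : MvPowerSeries (Fin 2) ℚ)⁻¹ =
      countingSeries fun n : ℕ => Finsupp.single 0 n :=
    (MvPowerSeries.inv_eq_iff_mul_eq_one (by simp)).mpr (countingSeries_single_mul_one_sub_X 0)
  rw [hinv, E_eq_countingSeries]
  linear_combination DyckWord.countingSeries_weight_firstReturn -
    X 0 * X 1 * countingSeries DyckWord.weight * DyckWord.countingSeries_weight_split_pyramids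
end
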